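/- arXiv:2006.11077 — 10 statements merged into one kernel-verified Lean document; each statement's English description precedes it below -/
import Mathlib

section
/- Let C₁ be a general compression operator with parameter δ₁ ≥ 1 and λ = 1, i.e., E[‖C₁(x) − x‖²] ≤ (1 − 1/δ₁)‖x‖² for all x, and let C₂ ∈ U(δ₂) be an unbiased compression operator, where C₁ and C₂ are defined on independent sources of randomness (a product probability space). Then the induced compressor C(x) := C₁(x) + C₂(x − C₁(x)) is unbiased: E[C(x)] = x for every x ∈ ℝ^d. -/
open MeasureTheory

/-- If `C₁ ∈ C(δ₁)` (general compressor with `λ = 1`) and `C₂ ∈ U(δ₂)`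
(unbiased compressor), defined on independent sources of randomness (a product
probability space), then the induced compressor `C(x) = C₁(x) + C₂(x − C₁(x))`
is unbiased: `E[C(x)] = x` for every `x`. -/
theorem induced_compressor_unbiased {d : ℕ} (hd : 1 ≤ d)
    {Ω₁ Ω₂ : Type*} [MeasurableSpace Ω₁] [MeasurableSpace Ω₂]
    (P₁ : Measure Ω₁) [IsProbabilityMeasure P₁]
    (P₂ : Measure Ω₂) [IsProbabilityMeasure P₂]
    (C₁ : Ω₁ → EuclideanSpace ℝ (Fin d) → EuclideanSpace ℝ (Fin d))
    (C₂ : Ω₂ → EuclideanSpace ℝ (Fin d) → EuclideanSpace ℝ (Fin d))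
    (δ₁ δ₂ : ℝ) (hδ₁ : 1 ≤ δ₁) (hδ₂ : 1 ≤ δ₂)
    -- C₁ is a general compression operator with λ = 1:
    (hC₁int : ∀ x, Integrable (fun ω => C₁ ω x) P₁)
    (hC₁ : ∀ x, ∫ ω, ‖C₁ ω x - x‖ ^ 2 ∂P₁ ≤ (1 - 1 / δ₁) * ‖x‖ ^ 2)
    -- C₂ is an unbiased compression operator with parameter δ₂:
    (hC₂int : ∀ x, Integrable (fun ω => C₂ ω x) P₂)
    (hC₂unb : ∀ x, ∫ ω, C₂ ω x ∂P₂ = x)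
    (hC₂sq : ∀ x, ∫ ω, ‖C₂ ω x‖ ^ 2 ∂P₂ ≤ δ₂ * ‖x‖ ^ 2)
    -- integrability of the induced compressor on the product space:
    (hint : ∀ x, Integrable
      (fun ω : Ω₁ × Ω₂ => C₁ ω.1 x + C₂ ω.2 (x - C₁ ω.1 x)) (P₁.prod P₂)) :
    ∀ x, ∫ ω : Ω₁ × Ω₂, (C₁ ω.1 x + C₂ ω.2 (x - C₁ ω.1 x)) ∂(P₁.prod P₂) = x := by
  intro x
  rw [MeasureTheory.integral_prod _ (hint x)]
  have h1 : ∀ ω₁ : Ω₁, ∫ ω₂, (C₁ ω₁ x + C₂ ω₂ (x - C₁ ω₁ x)) ∂P₂ = x := by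
    intro ω₁
    rw [integral_add (integrable_const _) (hC₂int _), integral_const, hC₂unb]
    simp
  simp only [h1, integral_const]
  simp
end

section
/- Let C₁ be a general compression operator with parameter δ₁ ≥ 1 and λ = 1, i.e., E[‖C₁(x) − x‖²] ≤ (1 − 1/δ₁)‖x‖² for all x, and let C₂ ∈ U(δ₂) be an unbiased compression operator, where C₁ and C₂ are defined on independent sources of randomness (a product probability space). Then the induced compressor C(x) := C₁(x) + C₂(x − C₁(x)) satisfies E[‖C(x) − x‖²] ≤ (δ₂ − 1)(1 − 1/δ₁)‖x‖² for every x ∈ ℝ^d, and consequently E[‖C(x)‖²] ≤ δ‖x‖² with δ = δ₂(1 − 1/δ₁) + 1/δ₁; that is, C ∈ U(δ). -/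
open MeasureTheory InnerProductSpace

section Aux
variable {E : Type*} [NormedAddCommGroup E] [InnerProductSpace ℝ E] [CompleteSpace E]
variable {Ω : Type*} [MeasurableSpace Ω]

lemma aux_var (P : Measure Ω) [IsProbabilityMeasure P] (C : Ω → E) (z : E)
    (hint : Integrable C P) (hsq : Integrable (fun ω => ‖C ω‖ ^ 2) P) :
    ∫ ω, ‖C ω - z‖ ^ 2 ∂P
      = ∫ ω, ‖C ω‖ ^ 2 ∂P - 2 * ⟪(∫ ω, C ω ∂P), z⟫_ℝ + ‖z‖ ^ 2 := by
  have hpt : ∀ ω, ‖C ω - z‖ ^ 2 = ‖C ω‖ ^ 2 - 2 * ⟪C ω, z⟫_ℝ + ‖z‖ ^ 2 := by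
    intro ω; rw [norm_sub_sq_real]
  have hinner : Integrable (fun ω => ⟪C ω, z⟫_ℝ) P := hint.inner_const z
  have hinner2 : Integrable (fun ω => 2 * ⟪C ω, z⟫_ℝ) P := hinner.const_mul 2
  have hA : Integrable (fun ω => ‖C ω‖ ^ 2 - 2 * ⟪C ω, z⟫_ℝ) P := hsq.sub hinner2
  rw [show (fun ω => ‖C ω - z‖ ^ 2) = fun ω => (‖C ω‖ ^ 2 - 2 * ⟪C ω, z⟫_ℝ) + ‖z‖ ^ 2
    from funext hpt]
  rw [integral_add hA (integrable_const _), integral_sub hsq hinner2,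
    integral_const_mul, integral_const]
  have : ∫ ω, ⟪C ω, z⟫_ℝ ∂P = ⟪(∫ ω, C ω ∂P), z⟫_ℝ := by
    have := integral_inner (𝕜 := ℝ) hint z
    simpa [real_inner_comm] using this
  rw [this]; simp
end Aux


/-- If `C₁ ∈ C(δ₁)` (general compressor with `λ = 1`) and `C₂ ∈ U(δ₂)`
(unbiased compressor), defined on independent sources of randomness, then the induced
compressor `C(x) = C₁(x) + C₂(x − C₁(x))` satisfies
`E‖C(x) − x‖² ≤ (δ₂ − 1)(1 − 1/δ₁)‖x‖²` and consequently
`E‖C(x)‖² ≤ δ‖x‖²` with `δ = δ₂(1 − 1/δ₁) + 1/δ₁`; together with unbiasedness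
(Statement 1) this gives `C ∈ U(δ)`. -/
theorem induced_compressor_variance {d : ℕ} (hd : 1 ≤ d)
    {Ω₁ Ω₂ : Type*} [MeasurableSpace Ω₁] [MeasurableSpace Ω₂]
    (P₁ : Measure Ω₁) [IsProbabilityMeasure P₁]
    (P₂ : Measure Ω₂) [IsProbabilityMeasure P₂]
    (C₁ : Ω₁ → EuclideanSpace ℝ (Fin d) → EuclideanSpace ℝ (Fin d))
    (C₂ : Ω₂ → EuclideanSpace ℝ (Fin d) → EuclideanSpace ℝ (Fin d))
    (δ₁ δ₂ : ℝ) (hδ₁ : 1 ≤ δ₁) (hδ₂ : 1 ≤ δ₂)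
    -- C₁ is a general compression operator with λ = 1:
    (hC₁int : ∀ x, Integrable (fun ω => C₁ ω x) P₁)
    (hC₁sqint : ∀ x, Integrable (fun ω => ‖C₁ ω x - x‖ ^ 2) P₁)
    (hC₁ : ∀ x, ∫ ω, ‖C₁ ω x - x‖ ^ 2 ∂P₁ ≤ (1 - 1 / δ₁) * ‖x‖ ^ 2)
    -- C₂ is an unbiased compression operator with parameter δ₂:
    (hC₂int : ∀ x, Integrable (fun ω => C₂ ω x) P₂)
    (hC₂sqint : ∀ x, Integrable (fun ω => ‖C₂ ω x‖ ^ 2) P₂)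
    (hC₂unb : ∀ x, ∫ ω, C₂ ω x ∂P₂ = x)
    (hC₂sq : ∀ x, ∫ ω, ‖C₂ ω x‖ ^ 2 ∂P₂ ≤ δ₂ * ‖x‖ ^ 2)
    -- integrability of the induced compressor on the product space:
    (hint : ∀ x, Integrable
      (fun ω : Ω₁ × Ω₂ => ‖C₁ ω.1 x + C₂ ω.2 (x - C₁ ω.1 x)‖ ^ 2) (P₁.prod P₂))
    (hint' : ∀ x, Integrable
      (fun ω : Ω₁ × Ω₂ => ‖C₁ ω.1 x + C₂ ω.2 (x - C₁ ω.1 x) - x‖ ^ 2) (P₁.prod P₂)) :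
    (∀ x, ∫ ω : Ω₁ × Ω₂, ‖C₁ ω.1 x + C₂ ω.2 (x - C₁ ω.1 x) - x‖ ^ 2 ∂(P₁.prod P₂)
        ≤ (δ₂ - 1) * (1 - 1 / δ₁) * ‖x‖ ^ 2) ∧
      ∀ x, ∫ ω : Ω₁ × Ω₂, ‖C₁ ω.1 x + C₂ ω.2 (x - C₁ ω.1 x)‖ ^ 2 ∂(P₁.prod P₂)
        ≤ (δ₂ * (1 - 1 / δ₁) + 1 / δ₁) * ‖x‖ ^ 2 := by

  -- notation: y ω₁ = x - C₁ ω₁ x, g ω = C₂ ω.2 (y ω.1) - y ω.1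
  have key : ∀ x, ∫ ω : Ω₁ × Ω₂, ‖C₁ ω.1 x + C₂ ω.2 (x - C₁ ω.1 x) - x‖ ^ 2 ∂(P₁.prod P₂)
      ≤ (δ₂ - 1) * (1 - 1 / δ₁) * ‖x‖ ^ 2 := by
    intro x
    set y : Ω₁ → EuclideanSpace ℝ (Fin d) := fun ω₁ => x - C₁ ω₁ x with hy
    have heq : ∀ ω : Ω₁ × Ω₂, C₁ ω.1 x + C₂ ω.2 (x - C₁ ω.1 x) - x
        = C₂ ω.2 (y ω.1) - y ω.1 := by
      intro ω; simp only [hy]; abel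
    have hint'' : Integrable (fun ω : Ω₁ × Ω₂ => ‖C₂ ω.2 (y ω.1) - y ω.1‖ ^ 2)
        (P₁.prod P₂) := by
      exact (hint' x).congr (Filter.Eventually.of_forall fun ω =>
        congrArg (fun v => ‖v‖ ^ 2) (heq ω))
    rw [show (fun ω : Ω₁ × Ω₂ => ‖C₁ ω.1 x + C₂ ω.2 (x - C₁ ω.1 x) - x‖ ^ 2)
        = fun ω : Ω₁ × Ω₂ => ‖C₂ ω.2 (y ω.1) - y ω.1‖ ^ 2 from
      funext fun ω => congrArg (fun v => ‖v‖ ^ 2) (heq ω)]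
    rw [integral_prod _ hint'']
    have inner_bound : ∀ ω₁, ∫ ω₂, ‖C₂ ω₂ (y ω₁) - y ω₁‖ ^ 2 ∂P₂
        ≤ (δ₂ - 1) * ‖y ω₁‖ ^ 2 := by
      intro ω₁
      rw [aux_var P₂ (fun ω₂ => C₂ ω₂ (y ω₁)) (y ω₁) (hC₂int _) (hC₂sqint _), hC₂unb,
        real_inner_self_eq_norm_sq]
      nlinarith [hC₂sq (y ω₁)]
    have hysq : Integrable (fun ω₁ => ‖y ω₁‖ ^ 2) P₁ := by
      refine (hC₁sqint x).congr (Filter.Eventually.of_forall fun ω₁ => ?_)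
      show ‖C₁ ω₁ x - x‖ ^ 2 = ‖y ω₁‖ ^ 2
      simp only [hy]; rw [norm_sub_rev]
    have hout1 : Integrable (fun ω₁ => ∫ ω₂, ‖C₂ ω₂ (y ω₁) - y ω₁‖ ^ 2 ∂P₂) P₁ :=
      hint''.integral_prod_left
    have hout2 : Integrable (fun ω₁ => (δ₂ - 1) * ‖y ω₁‖ ^ 2) P₁ := hysq.const_mul _
    have hCy : ∫ ω₁, ‖y ω₁‖ ^ 2 ∂P₁ ≤ (1 - 1 / δ₁) * ‖x‖ ^ 2 := by
      have : (fun ω₁ => ‖y ω₁‖ ^ 2) = fun ω₁ => ‖C₁ ω₁ x - x‖ ^ 2 :=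
        funext fun ω₁ => by rw [hy, norm_sub_rev]
      rw [this]; exact hC₁ x
    calc ∫ ω₁, ∫ ω₂, ‖C₂ ω₂ (y ω₁) - y ω₁‖ ^ 2 ∂P₂ ∂P₁
        ≤ ∫ ω₁, (δ₂ - 1) * ‖y ω₁‖ ^ 2 ∂P₁ := integral_mono hout1 hout2 inner_bound
      _ = (δ₂ - 1) * ∫ ω₁, ‖y ω₁‖ ^ 2 ∂P₁ := integral_const_mul _ _
      _ ≤ (δ₂ - 1) * ((1 - 1 / δ₁) * ‖x‖ ^ 2) := by
          exact mul_le_mul_of_nonneg_left hCy (by linarith)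
      _ = (δ₂ - 1) * (1 - 1 / δ₁) * ‖x‖ ^ 2 := by ring
  refine ⟨key, fun x => ?_⟩
  set y : Ω₁ → EuclideanSpace ℝ (Fin d) := fun ω₁ => x - C₁ ω₁ x with hy
  set g : Ω₁ × Ω₂ → EuclideanSpace ℝ (Fin d) :=
    fun ω => C₂ ω.2 (y ω.1) - y ω.1 with hg
  have heq : ∀ ω : Ω₁ × Ω₂, C₁ ω.1 x + C₂ ω.2 (x - C₁ ω.1 x) = g ω + x := by
    intro ω; simp only [hg, hy]; abel
  -- integrability of the inner product term
  have hGpt : ∀ ω : Ω₁ × Ω₂,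
      (‖C₁ ω.1 x + C₂ ω.2 (x - C₁ ω.1 x)‖ ^ 2
        - ‖C₁ ω.1 x + C₂ ω.2 (x - C₁ ω.1 x) - x‖ ^ 2 - ‖x‖ ^ 2) / 2
      = ⟪g ω, x⟫_ℝ := by
    intro ω
    have h1 : C₁ ω.1 x + C₂ ω.2 (x - C₁ ω.1 x) - x = g ω := by
      simp only [hg, hy]; abel
    rw [h1, heq ω, norm_add_sq_real]; ring
  have hG : Integrable (fun ω : Ω₁ × Ω₂ => ⟪g ω, x⟫_ℝ) (P₁.prod P₂) := by
    have : Integrable (fun ω : Ω₁ × Ω₂ =>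
        (‖C₁ ω.1 x + C₂ ω.2 (x - C₁ ω.1 x)‖ ^ 2
          - ‖C₁ ω.1 x + C₂ ω.2 (x - C₁ ω.1 x) - x‖ ^ 2 - ‖x‖ ^ 2) / 2) (P₁.prod P₂) :=
      (((hint x).sub (hint' x)).sub (integrable_const _)).div_const 2
    exact this.congr (Filter.Eventually.of_forall hGpt)
  have hzero : ∫ ω : Ω₁ × Ω₂, ⟪g ω, x⟫_ℝ ∂(P₁.prod P₂) = 0 := by
    rw [integral_prod _ hG]
    have h0 : ∀ ω₁, ∫ ω₂, ⟪g (ω₁, ω₂), x⟫_ℝ ∂P₂ = 0 := by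
      intro ω₁
      have hf : Integrable (fun ω₂ => C₂ ω₂ (y ω₁) - y ω₁) P₂ :=
        (hC₂int _).sub (integrable_const _)
      have hf0 : ∫ ω₂, (C₂ ω₂ (y ω₁) - y ω₁) ∂P₂ = 0 := by
        rw [integral_sub (hC₂int _) (integrable_const _), hC₂unb, integral_const]
        simp
      have := integral_inner (𝕜 := ℝ) hf x
      simp only [hg]
      rw [show (fun ω₂ => ⟪C₂ ω₂ (y ω₁) - y ω₁, x⟫_ℝ)
          = fun ω₂ => ⟪x, C₂ ω₂ (y ω₁) - y ω₁⟫_ℝ from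
        funext fun ω₂ => real_inner_comm _ _]
      rw [this, hf0, inner_zero_right]
    rw [show (fun ω₁ => ∫ ω₂, ⟪g (ω₁, ω₂), x⟫_ℝ ∂P₂) = fun _ => (0 : ℝ) from
      funext h0]
    simp
  have hsum : ∫ ω : Ω₁ × Ω₂, ‖C₁ ω.1 x + C₂ ω.2 (x - C₁ ω.1 x)‖ ^ 2 ∂(P₁.prod P₂)
      = (∫ ω : Ω₁ × Ω₂, ‖C₁ ω.1 x + C₂ ω.2 (x - C₁ ω.1 x) - x‖ ^ 2 ∂(P₁.prod P₂))
        + ‖x‖ ^ 2 := by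
    have hpt : ∀ ω : Ω₁ × Ω₂, ‖C₁ ω.1 x + C₂ ω.2 (x - C₁ ω.1 x)‖ ^ 2
        = ‖C₁ ω.1 x + C₂ ω.2 (x - C₁ ω.1 x) - x‖ ^ 2 + 2 * ⟪g ω, x⟫_ℝ + ‖x‖ ^ 2 := by
      intro ω
      have h1 : C₁ ω.1 x + C₂ ω.2 (x - C₁ ω.1 x) - x = g ω := by
        simp only [hg, hy]; abel
      rw [h1, heq ω, norm_add_sq_real]
    rw [show (fun ω : Ω₁ × Ω₂ => ‖C₁ ω.1 x + C₂ ω.2 (x - C₁ ω.1 x)‖ ^ 2)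
        = fun ω => (‖C₁ ω.1 x + C₂ ω.2 (x - C₁ ω.1 x) - x‖ ^ 2 + 2 * ⟪g ω, x⟫_ℝ)
          + ‖x‖ ^ 2 from funext fun ω => hpt ω]
    have hG2 : Integrable (fun ω : Ω₁ × Ω₂ => 2 * ⟪g ω, x⟫_ℝ) (P₁.prod P₂) :=
      hG.const_mul 2
    have hI1 : Integrable (fun ω : Ω₁ × Ω₂ =>
        ‖C₁ ω.1 x + C₂ ω.2 (x - C₁ ω.1 x) - x‖ ^ 2 + 2 * ⟪g ω, x⟫_ℝ) (P₁.prod P₂) :=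
      (hint' x).add hG2
    rw [integral_add hI1 (integrable_const _), integral_add (hint' x) hG2,
      integral_const_mul, hzero, integral_const]
    simp
  rw [hsum]
  have := key x
  have hfin : (δ₂ - 1) * (1 - 1 / δ₁) * ‖x‖ ^ 2 + ‖x‖ ^ 2
      = (δ₂ * (1 - 1 / δ₁) + 1 / δ₁) * ‖x‖ ^ 2 := by ring
  linarith
end

section
/- Let a, c, d be real numbers with 0 < a ≤ d and c ≥ 0, and let (r^k)_{k≥0}, (s^k)_{k≥0} be nonnegative real sequences satisfying r^{k+1} ≤ (1 − a/d)·r^k − (1/d)·s^k + c/d² for all k ≥ 0 (i.e., the recursion r^{k+1} ≤ (1 − aη)r^k − η s^k + η²c with the constant stepsize η = 1/d). Then for all T ≥ 0: r^T ≤ r⁰·exp(−aT/d) + c/(ad). -/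
/-- constant-stepsize sequence lemma. If `0 < a ≤ d`, `c ≥ 0`, and the
nonnegative sequences `(r^k)`, `(s^k)` satisfy
`r^{k+1} ≤ (1 − a/d) r^k − (1/d) s^k + c/d²` for all `k`, then for all `T ≥ 0`:
`r^T ≤ r⁰ exp(−aT/d) + c/(ad)`. -/
theorem sequence_lemma_constant_stepsize (a c d : ℝ) (ha : 0 < a) (had : a ≤ d)
    (hc : 0 ≤ c) (r s : ℕ → ℝ) (hr : ∀ k, 0 ≤ r k) (hs : ∀ k, 0 ≤ s k)
    (hrec : ∀ k, r (k + 1) ≤ (1 - a / d) * r k - (1 / d) * s k + c / d ^ 2) :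
    ∀ T : ℕ, r T ≤ r 0 * Real.exp (-(a * T) / d) + c / (a * d) := by
  have hd : 0 < d := lt_of_lt_of_le ha had
  have hq0 : 0 ≤ 1 - a / d := by
    have : a / d ≤ 1 := (div_le_one hd).mpr had
    linarith
  have hqe : 1 - a / d ≤ Real.exp (-(a / d)) := by
    have := Real.add_one_le_exp (-(a / d))
    linarith
  intro T
  induction T with
  | zero =>
      simp only [Nat.cast_zero, mul_zero, neg_zero, zero_div, Real.exp_zero, mul_one]
      have : 0 ≤ c / (a * d) := div_nonneg hc (by positivity)
      linarith
  | succ k ih =>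
      have h1 : r (k + 1) ≤ (1 - a / d) * r k + c / d ^ 2 := by
        have := hrec k
        have hs' : 0 ≤ (1 / d) * s k := mul_nonneg (by positivity) (hs k)
        linarith
      have h2 : (1 - a / d) * r k ≤ (1 - a / d) * (r 0 * Real.exp (-(a * k) / d) + c / (a * d)) :=
        mul_le_mul_of_nonneg_left ih hq0
      have h3 : (1 - a / d) * (r 0 * Real.exp (-(a * k) / d))
          ≤ Real.exp (-(a / d)) * (r 0 * Real.exp (-(a * k) / d)) :=
        mul_le_mul_of_nonneg_right hqe (mul_nonneg (hr 0) (Real.exp_nonneg _))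
      have h4 : Real.exp (-(a / d)) * (r 0 * Real.exp (-(a * k) / d))
          = r 0 * Real.exp (-(a * (k + 1 : ℕ)) / d) := by
        rw [show Real.exp (-(a / d)) * (r 0 * Real.exp (-(a * k) / d))
          = r 0 * (Real.exp (-(a / d)) * Real.exp (-(a * k) / d)) from by ring, ← Real.exp_add]
        congr 2
        push_cast
        field_simp
        ring
      have h5 : (1 - a / d) * (c / (a * d)) + c / d ^ 2 = c / (a * d) := by
        field_simp
        ring
      calc r (k + 1) ≤ (1 - a / d) * r k + c / d ^ 2 := h1
        _ ≤ (1 - a / d) * (r 0 * Real.exp (-(a * k) / d) + c / (a * d)) + c / d ^ 2 := by linarith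
        _ = (1 - a / d) * (r 0 * Real.exp (-(a * k) / d)) + ((1 - a / d) * (c / (a * d)) + c / d ^ 2) := by ring
        _ ≤ r 0 * Real.exp (-(a * (k + 1 : ℕ)) / d) + c / (a * d) := by
            rw [h5]; linarith [h3.trans_eq h4]
end

section
/- Let a > 0, d > 0 with 2d ≥ a, c ≥ 0, and an integer T ≥ 1. Set κ = 2d/a, stepsizes η^k = 2/(a(κ + k)), weights w^k = κ + k, and W^T = Σ_{k=0}^T w^k. If (r^k)_{k≥0}, (s^k)_{k≥0} are nonnegative real sequences satisfying r^{k+1} ≤ (1 − aη^k)·r^k − η^k·s^k + (η^k)²·c for all 0 ≤ k ≤ T, then (1/W^T)·Σ_{k=0}^T s^k w^k + a·r^{T+1} ≤ 2aκ²r⁰/T² + 8c/(aT). -/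
/-! The potential `Φₖ = a (κ + k - 1)² rₖ / 2` absorbs the contraction: multiplying the recursion by
`a (κ + k)² / 2` and using `x (x - 2) ≤ (x - 1)²` gives `wₖ sₖ + Φₖ₊₁ ≤ Φₖ + 2c/a`, which telescopes to
`Σₖ wₖ sₖ + Φ_{T+1} ≤ Φ₀ + 2(T + 1)c/a`. Both `W^T` and `(κ + T)²/2` are at least `T²/2`, so dividing
by `T²/2` bounds the weighted average of the `sₖ` and `a r_{T+1}` simultaneously. -/

open Finset

theorem sum_range_add_le_of_add_le_add {M : Type*} [AddCommMonoid M] [PartialOrder M]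
    [IsOrderedAddMonoid M] {u Φ : ℕ → M} {C : M} {n : ℕ}
    (h : ∀ k < n, u k + Φ (k + 1) ≤ Φ k + C) :
    ∑ k ∈ range n, u k + Φ n ≤ Φ 0 + n • C := by
  induction n with
  | zero => simp
  | succ m ih =>
    calc ∑ k ∈ range (m + 1), u k + Φ (m + 1)
        = ∑ k ∈ range m, u k + (u m + Φ (m + 1)) := by rw [sum_range_succ, add_assoc]
      _ ≤ ∑ k ∈ range m, u k + (Φ m + C) := add_le_add_right (h m m.lt_succ_self) _
      _ = (∑ k ∈ range m, u k + Φ m) + C := by rw [add_assoc]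
      _ ≤ (Φ 0 + m • C) + C := add_le_add_left (ih fun k hk => h k (hk.trans m.lt_succ_self)) _
      _ = Φ 0 + (m + 1) • C := by rw [succ_nsmul, add_assoc]

theorem sq_div_two_le_sum_range_succ_add_natCast {κ : ℝ} (hκ : 0 ≤ κ) (n : ℕ) :
    (n : ℝ) ^ 2 / 2 ≤ ∑ k ∈ range (n + 1), (κ + k) := by
  induction n with
  | zero => simpa using hκ
  | succ m ih =>
    rw [sum_range_succ]
    push_cast
    nlinarith

theorem stepsize_recursion_mul_sq_le {a c x r r' s : ℝ} (ha : 0 < a) (hx : 0 < x) (hr : 0 ≤ r)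
    (h : r' ≤ (1 - a * (2 / (a * x))) * r - 2 / (a * x) * s + (2 / (a * x)) ^ 2 * c) :
    s * x + a * x ^ 2 / 2 * r' ≤ a * (x - 1) ^ 2 / 2 * r + 2 * c / a := by
  have hscaled : a * x ^ 2 / 2 * r' ≤ a * x * (x - 2) / 2 * r - x * s + 2 * c / a := by
    calc a * x ^ 2 / 2 * r'
        ≤ a * x ^ 2 / 2 * ((1 - a * (2 / (a * x))) * r - 2 / (a * x) * s + (2 / (a * x)) ^ 2 * c) :=
          mul_le_mul_of_nonneg_left h (by positivity)
      _ = a * x * (x - 2) / 2 * r - x * s + 2 * c / a := by field_simp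
  have hcontract : a * x * (x - 2) / 2 * r ≤ a * (x - 1) ^ 2 / 2 * r := by
    refine mul_le_mul_of_nonneg_right ?_ hr
    nlinarith [sq_nonneg (x - 1)]
  linarith

theorem div_add_le_div_of_add_mul_le {S ρ V W D B : ℝ} (hS : 0 ≤ S) (hρ : 0 ≤ ρ) (hD : 0 < D)
    (hDW : D ≤ W) (hDV : D ≤ V) (h : S + V * ρ ≤ B) : S / W + ρ ≤ B / D := by
  calc S / W + ρ ≤ S / D + V * ρ / D := by
        gcongr
        rw [le_div_iff₀ hD, mul_comm]
        exact mul_le_mul_of_nonneg_right hDV hρ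
    _ = (S + V * ρ) / D := by rw [add_div]
    _ ≤ B / D := by gcongr
theorem telescoped_bound_div_le {a c κ r₀ : ℝ} {T : ℕ} (ha : 0 < a) (hc : 0 ≤ c) (hκ : 1 / 2 ≤ κ)
    (hr₀ : 0 ≤ r₀) (hT : 1 ≤ T) :
    (a * (κ - 1) ^ 2 / 2 * r₀ + (T + 1) * (2 * c / a)) / ((T : ℝ) ^ 2 / 2)
      ≤ 2 * a * κ ^ 2 * r₀ / (T : ℝ) ^ 2 + 8 * c / (a * T) := by
  have hT1 : (1 : ℝ) ≤ T := by exact_mod_cast hT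
  have hr₀' : a * (κ - 1) ^ 2 * r₀ ≤ 2 * a * κ ^ 2 * r₀ := by
    have := mul_nonneg ha.le hr₀
    nlinarith
  have hT' : ((T : ℝ) + 1) / T ≤ 2 := by
    rw [div_le_iff₀ (by positivity)]
    linarith
  calc (a * (κ - 1) ^ 2 / 2 * r₀ + (T + 1) * (2 * c / a)) / ((T : ℝ) ^ 2 / 2)
      = a * (κ - 1) ^ 2 * r₀ / (T : ℝ) ^ 2 + 4 * c / (a * T) * ((T + 1) / T) := by
        field_simp
        ring
    _ ≤ 2 * a * κ ^ 2 * r₀ / (T : ℝ) ^ 2 + 4 * c / (a * T) * 2 := by gcongr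
    _ = 2 * a * κ ^ 2 * r₀ / (T : ℝ) ^ 2 + 8 * c / (a * T) := by ring

theorem sequence_lemma_decreasing_stepsize_general (a c d : ℝ) (ha : 0 < a)
    (h2d : a ≤ 2 * d) (hc : 0 ≤ c) (T : ℕ) (hT : 1 ≤ T)
    (κ : ℝ) (hκ : κ = 2 * d / a)
    (η w : ℕ → ℝ)
    (hη : ∀ k, η k = 2 / (a * (κ + k)))
    (hw : ∀ k, w k = κ + k)
    (r s : ℕ → ℝ) (hr : ∀ k, 0 ≤ r k) (hs : ∀ k, 0 ≤ s k)
    (hrec : ∀ k ≤ T, r (k + 1) ≤ (1 - a * η k) * r k - η k * s k + (η k) ^ 2 * c) :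
    (1 / ∑ k ∈ Finset.range (T + 1), w k) * (∑ k ∈ Finset.range (T + 1), s k * w k)
        + a * r (T + 1)
      ≤ 2 * a * κ ^ 2 * r 0 / (T : ℝ) ^ 2 + 8 * c / (a * T) := by
  have hκ1 : 1 ≤ κ := by rw [hκ, le_div_iff₀ ha]; linarith
  have hpos : ∀ k : ℕ, 0 < κ + k := fun k => by positivity
  have htelescoped := sum_range_add_le_of_add_le_add (n := T + 1) (C := 2 * c / a)
    (u := fun k => s k * w k) (Φ := fun k => a * (κ + k - 1) ^ 2 / 2 * r k) fun k hk => by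
      have hstep := stepsize_recursion_mul_sq_le ha (hpos k) (hr k) (hη k ▸ hrec k (Nat.lt_succ_iff.mp hk))
      simpa only [hw, Nat.cast_succ, ← add_assoc, add_sub_cancel_right] using hstep
  have hW : (T : ℝ) ^ 2 / 2 ≤ ∑ k ∈ range (T + 1), w k := by
    simpa only [hw] using sq_div_two_le_sum_range_succ_add_natCast (by linarith) T
  have hSW : 0 ≤ ∑ k ∈ range (T + 1), s k * w k :=
    sum_nonneg fun k _ => mul_nonneg (hs k) (hw k ▸ (hpos k).le)
  have hV : (T : ℝ) ^ 2 / 2 ≤ (κ + T) ^ 2 / 2 := by gcongr; linarith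
  calc (1 / ∑ k ∈ range (T + 1), w k) * ∑ k ∈ range (T + 1), s k * w k + a * r (T + 1)
      ≤ (a * (κ - 1) ^ 2 / 2 * r 0 + (T + 1) * (2 * c / a)) / ((T : ℝ) ^ 2 / 2) := by
        rw [one_div_mul_eq_div]
        refine div_add_le_div_of_add_mul_le hSW (mul_nonneg ha.le (hr _)) (by positivity) hW hV ?_
        simp only [Nat.cast_succ, nsmul_eq_mul, ← add_assoc, add_sub_cancel_right] at htelescoped
        linarith
    _ ≤ 2 * a * κ ^ 2 * r 0 / (T : ℝ) ^ 2 + 8 * c / (a * T) :=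
        telescoped_bound_div_le ha hc (by linarith) (hr 0) hT

/-- decreasing-stepsize sequence lemma. With `a > 0`, `d > 0`, `2d ≥ a`,
`c ≥ 0`, `T ≥ 1`, `κ = 2d/a`, stepsizes `η^k = 2/(a(κ+k))`, weights `w^k = κ + k`,
any nonnegative sequences `(r^k)`, `(s^k)` satisfying
`r^{k+1} ≤ (1 − aη^k) r^k − η^k s^k + (η^k)² c` for `0 ≤ k ≤ T` obey
`(1/W^T) Σ_{k=0}^T s^k w^k + a r^{T+1} ≤ 2aκ²r⁰/T² + 8c/(aT)`. -/
theorem sequence_lemma_decreasing_stepsize (a c d : ℝ) (ha : 0 < a) (hd : 0 < d)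
    (h2d : a ≤ 2 * d) (hc : 0 ≤ c) (T : ℕ) (hT : 1 ≤ T)
    (κ : ℝ) (hκ : κ = 2 * d / a)
    (η w : ℕ → ℝ)
    (hη : ∀ k, η k = 2 / (a * (κ + k)))
    (hw : ∀ k, w k = κ + k)
    (r s : ℕ → ℝ) (hr : ∀ k, 0 ≤ r k) (hs : ∀ k, 0 ≤ s k)
    (hrec : ∀ k ≤ T, r (k + 1) ≤ (1 - a * η k) * r k - η k * s k + (η k) ^ 2 * c) :
    (1 / ∑ k ∈ Finset.range (T + 1), w k) * (∑ k ∈ Finset.range (T + 1), s k * w k)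
        + a * r (T + 1)
      ≤ 2 * a * κ ^ 2 * r 0 / (T : ℝ) ^ 2 + 8 * c / (a * T) :=
  sequence_lemma_decreasing_stepsize_general a c d ha h2d hc T hT κ hκ η w hη hw r s hr hs hrec
end

section
/- Let a, c, d be real numbers with 0 < a ≤ d and c ≥ 0, and let T ≥ 1 be an integer. Then there exist stepsizes η^k ∈ (0, 1/d] and weights w^k ≥ 0 (for 0 ≤ k ≤ T, not all w^k zero, and depending only on a, d, T) such that every pair of nonnegative real sequences (r^k), (s^k) satisfying r^{k+1} ≤ (1 − aη^k)·r^k − η^k·s^k + (η^k)²·c for all 0 ≤ k ≤ T obeys (1/W^T)·Σ_{k=0}^T s^k w^k + a·r^{T+1} ≤ 32·d·r⁰·exp(−aT/(2d)) + 36c/(aT), where W^T = Σ_{k=0}^T w^k. -/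
/-!
Run `t₀ ≈ T/2` steps with the constant stepsize `1/d`, then `m + 1 ≈ T/2` steps with the
decreasing stepsizes `2/(2d + a j)`. Multiplying the `k`-th inequality by a potential `H k` with
`(1 - a η (k+1)) H (k+1) ≤ H k` makes the recursion telescope, with weights `w k = η k H k`.
Geometric potentials in the first phase shrink the initial term by `(1 - a/d)^t₀ ≤ exp(-aT/(2d))`;
the quadratic potentials `(2d + a j)²` of the second phase keep the accumulated noise `c ∑ η² H`
linear in `m` while the total weight grows quadratically, which gives the rate `c/(aT)`.
-/

open Finset

lemma one_sub_div_nonneg_of_le {a d : ℝ} (hd : 0 < d) (had : a ≤ d) : 0 ≤ 1 - a / d :=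
  sub_nonneg.mpr ((div_le_one hd).mpr had)

lemma weighted_sum_add_le_of_recursion {a c : ℝ} {η H r s : ℕ → ℝ} (n : ℕ)
    (hH : ∀ k ≤ n, 0 ≤ H k) (hr : ∀ k, 0 ≤ r k)
    (hH_succ : ∀ k < n, (1 - a * η (k + 1)) * H (k + 1) ≤ H k)
    (hrec : ∀ k ≤ n, r (k + 1) ≤ (1 - a * η k) * r k - η k * s k + η k ^ 2 * c) :
    ∑ k ∈ range (n + 1), s k * (η k * H k) + H n * r (n + 1) ≤
      (1 - a * η 0) * H 0 * r 0 + c * ∑ k ∈ range (n + 1), η k ^ 2 * H k := by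
  have step : ∀ k ≤ n, s k * (η k * H k) + H k * r (k + 1) ≤
      (1 - a * η k) * H k * r k + c * (η k ^ 2 * H k) := fun k hk => by
    linear_combination mul_le_mul_of_nonneg_left (hrec k hk) (hH k hk)
  induction n with
  | zero => simpa using step 0 le_rfl
  | succ n ih =>
    have ih := ih (fun k hk => hH k (by omega)) (fun k hk => hH_succ k (by omega))
      (fun k hk => hrec k (by omega)) (fun k hk => step k (by omega))
    have h_drop := mul_le_mul_of_nonneg_right (hH_succ n n.lt_succ_self) (hr (n + 1))
    rw [sum_range_succ _ (n + 1), sum_range_succ _ (n + 1)]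
    linarith [step (n + 1) le_rfl]

noncomputable section

namespace TwoPhase

variable (a d : ℝ) (t₀ : ℕ)

-- `k - t₀` and `t₀ - 1 - k` truncate at `0`: for `k ≤ t₀` the stepsize is `1/d` and the potential
-- `4d² (1 - a/d)^(t₀-1-k)`, for `k = t₀ + j` they are `2/(2d + a j)` and `(2d + a j)²`.
def stepDenom (k : ℕ) : ℝ := 2 * d + a * (k - t₀ : ℕ)

def stepsize (k : ℕ) : ℝ := 2 / stepDenom a d t₀ k

def potential (k : ℕ) : ℝ := (1 - a / d) ^ (t₀ - 1 - k) * stepDenom a d t₀ k ^ 2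

def weight (k : ℕ) : ℝ := stepsize a d t₀ k * potential a d t₀ k

variable {a d t₀}

lemma stepDenom_of_le {k : ℕ} (hk : k ≤ t₀) : stepDenom a d t₀ k = 2 * d := by
  simp [stepDenom, Nat.sub_eq_zero_of_le hk]

lemma stepDenom_add (j : ℕ) : stepDenom a d t₀ (t₀ + j) = 2 * d + a * j := by
  simp [stepDenom]

lemma two_mul_le_stepDenom (ha : 0 ≤ a) (k : ℕ) : 2 * d ≤ stepDenom a d t₀ k :=
  le_add_of_nonneg_right (by positivity)

lemma stepDenom_pos (ha : 0 ≤ a) (hd : 0 < d) (k : ℕ) : 0 < stepDenom a d t₀ k :=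
  (by positivity : (0 : ℝ) < 2 * d).trans_le (two_mul_le_stepDenom ha k)

lemma stepsize_pos (ha : 0 ≤ a) (hd : 0 < d) (k : ℕ) : 0 < stepsize a d t₀ k :=
  div_pos two_pos (stepDenom_pos ha hd k)

lemma stepsize_le (ha : 0 ≤ a) (hd : 0 < d) (k : ℕ) : stepsize a d t₀ k ≤ 1 / d := by
  rw [stepsize, div_le_div_iff₀ (stepDenom_pos ha hd k) hd]
  linarith [two_mul_le_stepDenom (t₀ := t₀) (d := d) ha k]

lemma one_sub_mul_stepsize_of_le (hd : d ≠ 0) {k : ℕ} (hk : k ≤ t₀) :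
    1 - a * stepsize a d t₀ k = 1 - a / d := by
  rw [stepsize, stepDenom_of_le hk]
  field_simp

lemma potential_nonneg (hd : 0 < d) (had : a ≤ d) (k : ℕ) : 0 ≤ potential a d t₀ k := by
  have : 0 ≤ 1 - a / d := one_sub_div_nonneg_of_le hd had
  unfold potential
  positivity

lemma weight_eq (ha : 0 ≤ a) (hd : 0 < d) (k : ℕ) :
    weight a d t₀ k = 2 * (1 - a / d) ^ (t₀ - 1 - k) * stepDenom a d t₀ k := by
  have := (stepDenom_pos (t₀ := t₀) ha hd k).ne'
  rw [weight, stepsize, potential]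
  field_simp

lemma weight_nonneg (ha : 0 ≤ a) (hd : 0 < d) (had : a ≤ d) (k : ℕ) :
    0 ≤ weight a d t₀ k :=
  mul_nonneg (stepsize_pos ha hd k).le (potential_nonneg hd had k)

lemma sq_stepsize_mul_potential (ha : 0 ≤ a) (hd : 0 < d) (k : ℕ) :
    stepsize a d t₀ k ^ 2 * potential a d t₀ k = 4 * (1 - a / d) ^ (t₀ - 1 - k) := by
  have := (stepDenom_pos (t₀ := t₀) ha hd k).ne'
  rw [stepsize, potential]
  field_simp
  ring

lemma one_sub_mul_stepsize_mul_potential_le (ha : 0 ≤ a) (hd : 0 < d) (had : a ≤ d) {k : ℕ}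
    (hk : k ≤ t₀) :
    (1 - a * stepsize a d t₀ k) * potential a d t₀ k ≤ (1 - a / d) ^ (t₀ - k) * (2 * d) ^ 2 := by
  have hβ₀ : 0 ≤ 1 - a / d := one_sub_div_nonneg_of_le hd had
  have hβ₁ : 1 - a / d ≤ 1 := sub_le_self _ (div_nonneg ha hd.le)
  rw [one_sub_mul_stepsize_of_le hd.ne' hk, potential, stepDenom_of_le hk, ← mul_assoc,
    ← pow_succ']
  exact mul_le_mul_of_nonneg_right (pow_le_pow_of_le_one hβ₀ hβ₁ (by omega)) (by positivity)

lemma one_sub_mul_stepsize_mul_potential_succ_le (ha : 0 < a) (hd : 0 < d) (had : a ≤ d)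
    (k : ℕ) :
    (1 - a * stepsize a d t₀ (k + 1)) * potential a d t₀ (k + 1) ≤ potential a d t₀ k := by
  rcases lt_or_ge k t₀ with hk | hk
  · refine (one_sub_mul_stepsize_mul_potential_le ha.le hd had hk).trans_eq ?_
    rw [potential, stepDenom_of_le hk.le, show t₀ - (k + 1) = t₀ - 1 - k by omega]
  · obtain ⟨j, rfl⟩ := Nat.exists_eq_add_of_le hk
    have hx := stepDenom_pos (t₀ := t₀) ha.le hd (t₀ + j)
    rw [stepsize, potential, potential, show t₀ + j + 1 = t₀ + (j + 1) by ring, stepDenom_add,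
      stepDenom_add, Nat.sub_eq_zero_of_le (by omega), Nat.sub_eq_zero_of_le (by omega)]
    rw [stepDenom_add] at hx
    push_cast
    -- with `x = 2d + a j`, the left side is `(x - a)(x + a)`
    have : (1 - a * (2 / (2 * d + a * (j + 1)))) * (2 * d + a * (j + 1)) ^ 2 =
        (2 * d + a * j) ^ 2 - a ^ 2 := by
      field_simp
      ring
    nlinarith

lemma sum_sq_stepsize_mul_potential_le (ha : 0 < a) (hd : 0 < d) (had : a ≤ d) (m : ℕ) :
    ∑ k ∈ range (t₀ + m + 1), stepsize a d t₀ k ^ 2 * potential a d t₀ k ≤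
      4 * (d / a + (m + 1)) := by
  have hβ₀ : 0 ≤ 1 - a / d := one_sub_div_nonneg_of_le hd had
  have hβ₁ : 1 - a / d < 1 := sub_lt_self _ (div_pos ha hd)
  have h_geom : ∑ k ∈ range t₀, (1 - a / d) ^ (t₀ - 1 - k) ≤ d / a := by
    rw [sum_range_reflect (fun i => (1 - a / d) ^ i) t₀, ← Nat.Ico_zero_eq_range]
    refine (geom_sum_Ico_le_of_lt_one hβ₀ hβ₁).trans_eq ?_
    rw [sub_sub_cancel, pow_zero, one_div_div]
  have h_flat : ∑ j ∈ range (m + 1), (1 - a / d) ^ (t₀ - 1 - (t₀ + j)) = m + 1 := by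
    have (j : ℕ) : (1 - a / d) ^ (t₀ - 1 - (t₀ + j)) = 1 := by
      rw [Nat.sub_eq_zero_of_le (by omega), pow_zero]
    simp [this]
  simp_rw [sq_stepsize_mul_potential ha.le hd]
  rw [← mul_sum, add_assoc, sum_range_add, h_flat]
  gcongr

lemma mul_le_sum_weight (ha : 0 ≤ a) (hd : 0 < d) (had : a ≤ d) (m : ℕ) :
    (m + 1) * (4 * d + a * m) ≤ ∑ k ∈ range (t₀ + m + 1), weight a d t₀ k := by
  have h_arith (n : ℕ) :
      ∑ j ∈ range (n + 1), 2 * (2 * d + a * j) = (n + 1) * (4 * d + a * n) := by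
    induction n with
    | zero => simp; ring
    | succ n ih => rw [sum_range_succ, ih]; push_cast; ring
  have h_phase₂ :
      ∑ j ∈ range (m + 1), weight a d t₀ (t₀ + j) = (m + 1) * (4 * d + a * m) := by
    rw [← h_arith]
    refine sum_congr rfl fun j _ => ?_
    rw [weight_eq ha hd, stepDenom_add, Nat.sub_eq_zero_of_le (by omega), pow_zero, mul_one]
  rw [add_assoc, sum_range_add, h_phase₂]
  exact le_add_of_nonneg_left (sum_nonneg fun k _ => weight_nonneg ha hd had k)

lemma sum_mul_weight_add_potential_mul_le (ha : 0 < a) (had : a ≤ d) {c : ℝ} (hc : 0 ≤ c)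
    (m : ℕ) {r s : ℕ → ℝ} (hr : ∀ k, 0 ≤ r k)
    (hrec : ∀ k ≤ t₀ + m, r (k + 1) ≤ (1 - a * stepsize a d t₀ k) * r k -
      stepsize a d t₀ k * s k + stepsize a d t₀ k ^ 2 * c) :
    ∑ k ∈ range (t₀ + m + 1), s k * weight a d t₀ k +
        potential a d t₀ (t₀ + m) * r (t₀ + m + 1) ≤
      4 * d * (d * (1 - a / d) ^ t₀ * r 0) + 4 * c * (d + a * (m + 1)) / a := by
  have hd : 0 < d := ha.trans_le had
  have h_tel := weighted_sum_add_le_of_recursion (t₀ + m) (fun k _ => potential_nonneg hd had k)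
    hr (fun k _ => one_sub_mul_stepsize_mul_potential_succ_le ha hd had k) hrec
  have h_init := mul_le_mul_of_nonneg_right
    (one_sub_mul_stepsize_mul_potential_le ha.le hd had (Nat.zero_le t₀)) (hr 0)
  have h_noise := mul_le_mul_of_nonneg_left
    (sum_sq_stepsize_mul_potential_le (t₀ := t₀) ha hd had m) hc
  have h_noise_eq : c * (4 * (d / a + (m + 1))) = 4 * c * (d + a * (m + 1)) / a := by
    field_simp
  rw [Nat.sub_zero] at h_init
  simp only [weight] at h_tel ⊢
  linarith [show (1 - a / d) ^ t₀ * (2 * d) ^ 2 * r 0 = 4 * d * (d * (1 - a / d) ^ t₀ * r 0) by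
    ring]

lemma weighted_average_add_le (ha : 0 < a) (had : a ≤ d) {c : ℝ} (hc : 0 ≤ c) (m : ℕ)
    {r s : ℕ → ℝ} (hr : ∀ k, 0 ≤ r k) (hs : ∀ k, 0 ≤ s k)
    (hrec : ∀ k ≤ t₀ + m, r (k + 1) ≤ (1 - a * stepsize a d t₀ k) * r k -
      stepsize a d t₀ k * s k + stepsize a d t₀ k ^ 2 * c) :
    (1 / ∑ k ∈ range (t₀ + m + 1), weight a d t₀ k) *
        (∑ k ∈ range (t₀ + m + 1), s k * weight a d t₀ k) + a * r (t₀ + m + 1) ≤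
      2 * (d * (1 - a / d) ^ t₀ * r 0) + 8 * c / (a * (m + 1)) := by
  have hd : 0 < d := ha.trans_le had
  have hm : (0 : ℝ) < m + 1 := by positivity
  have h_total := sum_mul_weight_add_potential_mul_le ha had hc m hr hrec
  set W := ∑ k ∈ range (t₀ + m + 1), weight a d t₀ k
  set S := ∑ k ∈ range (t₀ + m + 1), s k * weight a d t₀ k
  set B := d * (1 - a / d) ^ t₀ * r 0
  set Q := d + a * (m + 1)
  set X := 4 * c / (a * (m + 1))
  have hB : 0 ≤ B := mul_nonneg (mul_nonneg hd.le (pow_nonneg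
    (one_sub_div_nonneg_of_le hd had) _)) (hr 0)
  have hX₀ : 0 ≤ X := by positivity
  have hQX : 4 * c * Q / a = (m + 1) * Q * X := by
    simp only [X]
    field_simp
  have hS : 0 ≤ S := sum_nonneg fun k _ => mul_nonneg (hs k) (weight_nonneg ha.le hd had k)
  have hρ := hr (t₀ + m + 1)
  have h_Hρ : 0 ≤ potential a d t₀ (t₀ + m) * r (t₀ + m + 1) :=
    mul_nonneg (potential_nonneg hd had _) hρ
  have h_avg : 1 / W * S ≤ B + X := by
    have hW : (m + 1) * (4 * d + a * m) ≤ W := mul_le_sum_weight ha.le hd had m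
    have hm₀ : (0 : ℝ) ≤ m := m.cast_nonneg
    have hW₁ : 4 * d ≤ W := by
      nlinarith [mul_nonneg hm₀ hd.le, mul_nonneg hm.le (mul_nonneg ha.le hm₀)]
    have hW₂ : (m + 1) * Q ≤ W := by nlinarith
    rw [one_div_mul_eq_div, div_le_iff₀ (by linarith)]
    nlinarith [mul_le_mul_of_nonneg_left hW₁ hB, mul_le_mul_of_nonneg_left hW₂ hX₀]
  have h_last : a * r (t₀ + m + 1) ≤ B + X := by
    have hH : Q ^ 2 ≤ potential a d t₀ (t₀ + m) := by
      rw [potential, stepDenom_add, Nat.sub_eq_zero_of_le (by omega), pow_zero, one_mul]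
      exact pow_le_pow_left₀ (by positivity) (by linarith) 2
    have hQ : 4 * a * d ≤ Q ^ 2 := by nlinarith [sq_nonneg (d - a * (m + 1))]
    refine le_of_mul_le_mul_left ?_ (pow_pos (by positivity : 0 < Q) 2)
    calc Q ^ 2 * (a * r (t₀ + m + 1))
        ≤ a * (potential a d t₀ (t₀ + m) * r (t₀ + m + 1)) := by
          nlinarith [mul_le_mul_of_nonneg_right hH hρ]
      _ ≤ a * (4 * d * B + (m + 1) * Q * X) := by gcongr; linarith
      _ = 4 * a * d * B + a * (m + 1) * (Q * X) := by ring
      _ ≤ Q ^ 2 * B + Q * (Q * X) := by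
          gcongr
          linarith
      _ = Q ^ 2 * (B + X) := by ring
  linarith [show 8 * c / (a * (m + 1)) = 2 * X by ring]

end TwoPhase

end

lemma one_sub_div_pow_le_exp {a d : ℝ} {t₀ T : ℕ} (ha : 0 ≤ a) (hd : 0 < d) (had : a ≤ d)
    (hT : T ≤ 2 * t₀) : (1 - a / d) ^ t₀ ≤ Real.exp (-(a * T) / (2 * d)) := by
  have hT' : (T : ℝ) ≤ 2 * t₀ := by exact_mod_cast hT
  calc (1 - a / d) ^ t₀ ≤ Real.exp (-(a / d)) ^ t₀ :=
        pow_le_pow_left₀ (one_sub_div_nonneg_of_le hd had) (Real.one_sub_le_exp_neg _) _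
    _ = Real.exp (-(a * (2 * t₀)) / (2 * d)) := by
        rw [← Real.exp_nat_mul]
        congr 1
        field_simp
    _ ≤ Real.exp (-(a * T) / (2 * d)) := by
        gcongr

/-- combined sequence lemma. For `0 < a ≤ d`, `c ≥ 0` and an integer
`T ≥ 1`, there exist stepsizes `η^k ∈ (0, 1/d]` and weights `w^k ≥ 0` (not all zero,
depending only on `a, d, T`) such that every pair of nonnegative sequences
`(r^k), (s^k)` satisfying `r^{k+1} ≤ (1 − aη^k) r^k − η^k s^k + (η^k)² c` for
`0 ≤ k ≤ T` obeys
`(1/W^T) Σ_{k=0}^T s^k w^k + a r^{T+1} ≤ 32 d r⁰ exp(−aT/(2d)) + 36c/(aT)`. -/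
theorem sequence_lemma_combined (a c d : ℝ) (ha : 0 < a) (had : a ≤ d) (hc : 0 ≤ c)
    (T : ℕ) (hT : 1 ≤ T) :
    ∃ η w : ℕ → ℝ,
      (∀ k ≤ T, 0 < η k ∧ η k ≤ 1 / d) ∧
      (∀ k ≤ T, 0 ≤ w k) ∧
      (0 < ∑ k ∈ Finset.range (T + 1), w k) ∧
      ∀ r s : ℕ → ℝ, (∀ k, 0 ≤ r k) → (∀ k, 0 ≤ s k) →
        (∀ k ≤ T, r (k + 1) ≤ (1 - a * η k) * r k - η k * s k + (η k) ^ 2 * c) →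
        (1 / ∑ k ∈ Finset.range (T + 1), w k) *
            (∑ k ∈ Finset.range (T + 1), s k * w k) + a * r (T + 1)
          ≤ 32 * d * r 0 * Real.exp (-(a * T) / (2 * d)) + 36 * c / (a * T) := by
  have hd : 0 < d := ha.trans_le had
  obtain ⟨t₀, m, rfl, ht₀, hm⟩ : ∃ t₀ m : ℕ, T = t₀ + m ∧ T ≤ 2 * t₀ ∧ T ≤ 2 * (m + 1) :=
    ⟨T - T / 2, T / 2, by omega, by omega, by omega⟩
  refine ⟨TwoPhase.stepsize a d t₀, TwoPhase.weight a d t₀,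
    fun k _ => ⟨TwoPhase.stepsize_pos ha.le hd k, TwoPhase.stepsize_le ha.le hd k⟩,
    fun k _ => TwoPhase.weight_nonneg ha.le hd had k,
    (by positivity : (0 : ℝ) < (m + 1) * (4 * d + a * m)).trans_le
      (TwoPhase.mul_le_sum_weight ha.le hd had m),
    fun r s hr hs hrec => ?_⟩
  have h_avg := TwoPhase.weighted_average_add_le ha had hc m hr hs hrec
  have h_exp := mul_le_mul_of_nonneg_left (one_sub_div_pow_le_exp ha.le hd had ht₀)
    (mul_nonneg hd.le (hr 0))
  have h_noise : 8 * c / (a * (m + 1)) ≤ 36 * c / (a * (t₀ + m : ℕ)) := by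
    have hT' : ((t₀ + m : ℕ) : ℝ) ≤ 2 * (m + 1) := by exact_mod_cast hm
    have hT₀ : (0 : ℝ) < (t₀ + m : ℕ) := by exact_mod_cast hT
    have hca : 0 ≤ c * a := mul_nonneg hc ha.le
    rw [div_le_div_iff₀ (by positivity) (mul_pos ha hT₀)]
    nlinarith [mul_le_mul_of_nonneg_left hT' hca, mul_nonneg hca (by positivity : (0 : ℝ) ≤ m + 1)]
  nlinarith [Real.exp_pos (-(a * (t₀ + m : ℕ)) / (2 * d)), mul_nonneg hd.le (hr 0)]
end

section
/- Let f₁, …, f_n : ℝ^d → ℝ be differentiable and f = (1/n)Σ_{i=1}^n f_i. Assume f has minimizer x* with f* = f(x*) and is μ-quasi convex with μ ≥ 0: f* ≥ f(x) + ⟨∇f(x), x* − x⟩ + (μ/2)‖x* − x‖² for all x ∈ ℝ^d. Assume each f_i is bounded below with infimum f_i*, and set D = (2L/n)·Σ_{i=1}^n (f_i(x*) − f_i*) and δ_n = (δ − 1)/n + 1. Fix x ∈ ℝ^d and let g₁, …, g_n be random vectors in ℝ^d with E[gᵢ] = ∇f_i(x), E[‖gᵢ‖²] ≤ 2L(f_i(x)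 − f_i*) + σ² for each i, and E[‖(1/n)Σᵢ gᵢ‖²] ≤ 2L(f(x) − f*) + σ²/n. Let C₁, …, C_n ∈ U(δ) be unbiased compression operators whose randomness is mutually independent and independent of (g₁, …, g_n). Then for any stepsize η > 0, the point x⁺ = x − (η/n)·Σ_{i=1}^n Cᵢ(gᵢ) satisfies E[‖x⁺ − x*‖²] ≤ (1 − μη)‖x − x*‖² − 2η(1 − η δ_n L)(f(x) − f*) + η²·((δ_n − 1)D + δσ²/n). -/
/-
Fix the gradient sample `y = g(ω)` and average over the compressors first. They are unbiased
and mutually independent, so `E ‖∑ᵢ Cᵢ(yᵢ)‖²` is `‖∑ᵢ yᵢ‖²` plus the variances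
`E ‖Cᵢ(yᵢ)‖² - ‖yᵢ‖² ≤ (δ - 1) ‖yᵢ‖²`: compared with uncompressed SGD, the step costs at most
`(η/n)² (δ - 1) ∑ᵢ ‖gᵢ‖²` more. Averaging then over the gradients (Fubini), the cross term
`-2 (η/n) ⟪x - x*, ∑ᵢ ∇fᵢ(x)⟫ = -2η ⟪x - x*, ∇f(x)⟫` is controlled by quasi-convexity, and the
second moments by the two expected-smoothness bounds.
-/

open MeasureTheory ProbabilityTheory
open scoped RealInnerProductSpace

lemma integral_norm_smul_sq {Ω E : Type*} [MeasurableSpace Ω] {μ : Measure Ω}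
    [NormedAddCommGroup E] [NormedSpace ℝ E] (c : ℝ) (X : Ω → E) :
    ∫ ω, ‖c • X ω‖ ^ 2 ∂μ = c ^ 2 * ∫ ω, ‖X ω‖ ^ 2 ∂μ := by
  simp_rw [norm_smul, mul_pow, Real.norm_eq_abs, sq_abs]
  exact integral_const_mul _ _

section SecondMoments

variable {Ω E : Type*} [MeasurableSpace Ω] {μ : Measure Ω}
  [NormedAddCommGroup E] [InnerProductSpace ℝ E]

lemma MeasureTheory.MemLp.integrable_inner {X Y : Ω → E} (hX : MemLp X 2 μ)
    (hY : MemLp Y 2 μ) : Integrable (fun ω => ⟪X ω, Y ω⟫) μ :=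
  (L2.integrable_inner (hX.toLp X) (hY.toLp Y)).congr <| by
    filter_upwards [hX.coeFn_toLp, hY.coeFn_toLp] with ω hXω hYω
    rw [hXω, hYω]

lemma integral_norm_sub_sq [CompleteSpace E] [IsProbabilityMeasure μ] (a : E) {X : Ω → E}
    (hX : MemLp X 2 μ) :
    ∫ ω, ‖a - X ω‖ ^ 2 ∂μ = ‖a‖ ^ 2 - 2 * ⟪a, ∫ ω, X ω ∂μ⟫ + ∫ ω, ‖X ω‖ ^ 2 ∂μ := by
  have hXint : Integrable X μ := hX.integrable one_le_two
  have hinner : Integrable (fun ω => 2 * ⟪a, X ω⟫) μ := (hXint.const_inner a).const_mul 2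
  simp_rw [norm_sub_sq_real]
  rw [integral_add (f := fun ω => ‖a‖ ^ 2 - 2 * ⟪a, X ω⟫) ((integrable_const _).sub hinner)
      (hX.integrable_norm_pow two_ne_zero),
    integral_sub (integrable_const _) hinner, integral_const, integral_const_mul,
    integral_inner hXint]
  simp

end SecondMoments

lemma norm_sum_sq_eq_sum_sum_inner {ι E : Type*} [NormedAddCommGroup E] [InnerProductSpace ℝ E]
    (s : Finset ι) (v : ι → E) : ‖∑ i ∈ s, v i‖ ^ 2 = ∑ i ∈ s, ∑ j ∈ s, ⟪v i, v j⟫ := by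
  rw [← real_inner_self_eq_norm_sq, sum_inner]
  simp_rw [inner_sum]

section ProductSpace

variable {ι : Type*} [Fintype ι] {Ω : ι → Type*} [∀ i, MeasurableSpace (Ω i)]
  {κ : ∀ i, Measure (Ω i)} [∀ i, IsProbabilityMeasure (κ i)]
  {E : Type*} [NormedAddCommGroup E] [InnerProductSpace ℝ E] [CompleteSpace E]

lemma MeasureTheory.MemLp.comp_eval {β : Type*} [NormedAddCommGroup β] {p : ENNReal} {i : ι}
    {F : Ω i → β} (hF : MemLp F p (κ i)) : MemLp (fun ω => F (ω i)) p (Measure.pi κ) :=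
  hF.comp_measurePreserving (measurePreserving_eval κ i)

lemma integral_inner_comp_eval_of_ne {i j : ι} (hij : i ≠ j) {F : Ω i → E} {G : Ω j → E}
    (hF : Integrable F (κ i)) (hG : Integrable G (κ j)) :
    ∫ ω, ⟪F (ω i), G (ω j)⟫ ∂Measure.pi κ = ⟪∫ z, F z ∂κ i, ∫ z, G z ∂κ j⟫ := by
  have hindep : (fun ω : ∀ l, Ω l => ω i) ⟂ᵢ[Measure.pi κ] (fun ω => ω j) :=
    (iIndepFun_pi (X := fun _ => id) fun _ => aemeasurable_id).indepFun hij
  have := hindep.integral_bilin_comp_comp (measurable_pi_apply i).aemeasurable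
    (measurable_pi_apply j).aemeasurable (by rwa [(measurePreserving_eval κ i).map_eq])
    (by rwa [(measurePreserving_eval κ j).map_eq]) (innerSL ℝ)
  rw [integral_comp_eval hF.1, integral_comp_eval hG.1] at this
  exact this

lemma integral_inner_comp_eval [DecidableEq ι] {F : ∀ i, Ω i → E} (hF : ∀ i, MemLp (F i) 2 (κ i))
    (i j : ι) :
    ∫ ω, ⟪F i (ω i), F j (ω j)⟫ ∂Measure.pi κ = ⟪∫ z, F i z ∂κ i, ∫ z, F j z ∂κ j⟫
      + if i = j then ∫ z, ‖F i z‖ ^ 2 ∂κ i - ‖∫ z, F i z ∂κ i‖ ^ 2 else 0 := by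
  rcases eq_or_ne i j with rfl | hij
  · simp only [real_inner_self_eq_norm_sq, if_true]
    rw [integral_comp_eval (f := fun z => ‖F i z‖ ^ 2) ((hF i).1.norm.pow 2)]
    ring
  · rw [if_neg hij, add_zero, integral_inner_comp_eval_of_ne hij
      ((hF i).integrable one_le_two) ((hF j).integrable one_le_two)]

lemma integral_norm_sum_comp_eval_sq {F : ∀ i, Ω i → E} (hF : ∀ i, MemLp (F i) 2 (κ i)) :
    ∫ ω, ‖∑ i, F i (ω i)‖ ^ 2 ∂Measure.pi κ = ‖∑ i, ∫ z, F i z ∂κ i‖ ^ 2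
      + ∑ i, (∫ z, ‖F i z‖ ^ 2 ∂κ i - ‖∫ z, F i z ∂κ i‖ ^ 2) := by
  classical
  have hint : ∀ i j, Integrable (fun ω => ⟪F i (ω i), F j (ω j)⟫) (Measure.pi κ) :=
    fun i j => (hF i).comp_eval.integrable_inner (hF j).comp_eval
  simp_rw [norm_sum_sq_eq_sum_sum_inner]
  rw [integral_finsetSum _ fun i _ => integrable_finsetSum _ fun j _ => hint i j]
  simp_rw [integral_finsetSum _ fun j _ => hint _ j, integral_inner_comp_eval hF,
    Finset.sum_add_distrib, Finset.sum_ite_eq, Finset.mem_univ, if_true]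

end ProductSpace

/-- `C ∈ U(δ)`, with the randomness of the compressor made explicit: `C ω` is the map drawn
when the compressor's own randomness takes the value `ω ∼ κ`. -/
structure IsUnbiasedCompressor {Ω E : Type*} [MeasurableSpace Ω] [NormedAddCommGroup E]
    [InnerProductSpace ℝ E] (κ : Measure Ω) (δ : ℝ) (C : Ω → E → E) : Prop where
  memLp : ∀ y, MemLp (fun ω => C ω y) 2 κ
  integral_eq : ∀ y, ∫ ω, C ω y ∂κ = y
  integral_norm_sq_le : ∀ y, ∫ ω, ‖C ω y‖ ^ 2 ∂κ ≤ δ * ‖y‖ ^ 2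

namespace IsUnbiasedCompressor

variable {ι : Type*} [Fintype ι] {Ω : ι → Type*} [∀ i, MeasurableSpace (Ω i)]
  {κ : ∀ i, Measure (Ω i)} [∀ i, IsProbabilityMeasure (κ i)]
  {E : Type*} [NormedAddCommGroup E] [InnerProductSpace ℝ E] [CompleteSpace E]
  {δ : ℝ} {C : ∀ i, Ω i → E → E}

lemma integral_norm_sum_sq_le (hC : ∀ i, IsUnbiasedCompressor (κ i) δ (C i)) (y : ι → E) :
    ∫ ω, ‖∑ i, C i (ω i) (y i)‖ ^ 2 ∂Measure.pi κ
      ≤ ‖∑ i, y i‖ ^ 2 + (δ - 1) * ∑ i, ‖y i‖ ^ 2 := by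
  rw [integral_norm_sum_comp_eval_sq fun i => (hC i).memLp (y i)]
  simp_rw [(hC _).integral_eq, Finset.mul_sum]
  gcongr with i
  linarith [(hC i).integral_norm_sq_le (y i)]

lemma integral_norm_sub_smul_sum_sq_le (hC : ∀ i, IsUnbiasedCompressor (κ i) δ (C i))
    (a : E) (c : ℝ) (y : ι → E) :
    ∫ ω, ‖a - c • ∑ i, C i (ω i) (y i)‖ ^ 2 ∂Measure.pi κ
      ≤ ‖a - c • ∑ i, y i‖ ^ 2 + c ^ 2 * ((δ - 1) * ∑ i, ‖y i‖ ^ 2) := by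
  have hX : MemLp (fun ω => c • ∑ i, C i (ω i) (y i)) 2 (Measure.pi κ) :=
    (memLp_finsetSum _ fun i _ => ((hC i).memLp (y i)).comp_eval).const_smul c
  have hmean : ∫ ω, c • ∑ i, C i (ω i) (y i) ∂Measure.pi κ = c • ∑ i, y i := by
    rw [integral_smul, integral_finsetSum _ fun i _ =>
      ((hC i).memLp (y i)).comp_eval.integrable one_le_two]
    simp_rw [integral_comp_eval ((hC _).memLp (y _)).1, (hC _).integral_eq]
  rw [integral_norm_sub_sq a hX, hmean, integral_norm_smul_sq, norm_sub_sq_real, norm_smul,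
    mul_pow, Real.norm_eq_abs, sq_abs]
  have := integral_norm_sum_sq_le hC y
  have := sq_nonneg c
  nlinarith

lemma integral_prod_norm_sub_smul_sum_sq_le {Ω' : Type*} [MeasurableSpace Ω'] {ν : Measure Ω'}
    [IsProbabilityMeasure ν] (hC : ∀ i, IsUnbiasedCompressor (κ i) δ (C i)) (a : E) (c : ℝ)
    {g : ι → Ω' → E} (hg : ∀ i, MemLp (g i) 2 ν)
    (hint : Integrable (fun ω => ‖a - c • ∑ i, C i (ω.2 i) (g i ω.1)‖ ^ 2)
      (ν.prod (Measure.pi κ))) :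
    ∫ ω, ‖a - c • ∑ i, C i (ω.2 i) (g i ω.1)‖ ^ 2 ∂ν.prod (Measure.pi κ)
      ≤ ‖a‖ ^ 2 - 2 * c * ⟪a, ∑ i, ∫ ω, g i ω ∂ν⟫
        + c ^ 2 * (∫ ω, ‖∑ i, g i ω‖ ^ 2 ∂ν + (δ - 1) * ∑ i, ∫ ω, ‖g i ω‖ ^ 2 ∂ν) := by
  have hX : MemLp (fun ω => c • ∑ i, g i ω) 2 ν :=
    (memLp_finsetSum _ fun i _ => hg i).const_smul c
  have hdev : Integrable (fun ω => ‖a - c • ∑ i, g i ω‖ ^ 2) ν :=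
    ((memLp_const a).sub hX).integrable_norm_pow two_ne_zero
  have hvar : Integrable (fun ω => c ^ 2 * ((δ - 1) * ∑ i, ‖g i ω‖ ^ 2)) ν :=
    ((integrable_finsetSum _ fun i _ => (hg i).integrable_norm_pow two_ne_zero).const_mul _).const_mul
      _
  rw [integral_prod _ hint]
  calc _ ≤ ∫ ω, (‖a - c • ∑ i, g i ω‖ ^ 2 + c ^ 2 * ((δ - 1) * ∑ i, ‖g i ω‖ ^ 2)) ∂ν :=
        integral_mono hint.integral_prod_left (hdev.add hvar) fun ω =>
          integral_norm_sub_smul_sum_sq_le hC a c fun i => g i ω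
    _ = _ := by
        rw [integral_add hdev hvar, integral_norm_sub_sq a hX, integral_smul,
          integral_finsetSum _ fun i _ => (hg i).integrable one_le_two, integral_norm_smul_sq,
          integral_const_mul, integral_const_mul,
          integral_finsetSum _ fun i _ => (hg i).integrable_norm_pow two_ne_zero,
          real_inner_smul_right]
        ring

end IsUnbiasedCompressor

lemma gradient_const_mul_sum {ι F : Type*} [Fintype ι] [NormedAddCommGroup F]
    [InnerProductSpace ℝ F] [CompleteSpace F] {f : ι → F → ℝ} {x : F}
    (hf : ∀ i, DifferentiableAt ℝ (f i) x) (c : ℝ) :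
    gradient (fun y => c * ∑ i, f i y) x = c • ∑ i, gradient (f i) x := by
  have hderiv : fderiv ℝ (fun y => c * ∑ i, f i y) x = c • ∑ i, fderiv ℝ (f i) x := by
    rw [fderiv_const_mul (DifferentiableAt.fun_sum fun i _ => hf i),
      fderiv_fun_sum fun i _ => hf i]
  rw [gradient, hderiv, map_smul, map_sum]
  rfl

theorem dcsgd_one_step_descent_general {d n : ℕ} (hn : 1 ≤ n)
    (L : ℝ) (σ2 : ℝ) (δ : ℝ) (hδ : 1 ≤ δ)
    (μq : ℝ)
    (f : Fin n → EuclideanSpace ℝ (Fin d) → ℝ)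
    (hfdiff : ∀ i, Differentiable ℝ (f i))
    (favg : EuclideanSpace ℝ (Fin d) → ℝ)
    (hfavg : favg = fun y => (1 / (n : ℝ)) * ∑ i, f i y)
    (xstar : EuclideanSpace ℝ (Fin d))
    (fstar : ℝ) (hfstar : fstar = favg xstar)
    (hquasi : ∀ y, fstar ≥ favg y + ⟪gradient favg y, xstar - y⟫
      + (μq / 2) * ‖xstar - y‖ ^ 2)
    (finf : Fin n → ℝ)
    (D : ℝ) (hD : D = (2 * L / (n : ℝ)) * ∑ i, (f i xstar - finf i))
    (δn : ℝ) (hδn : δn = (δ - 1) / (n : ℝ) + 1)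
    (x : EuclideanSpace ℝ (Fin d))
    -- the stochastic gradients g₁, …, g_n at the point x
    {Ωg : Type*} [MeasurableSpace Ωg] (ν : Measure Ωg) [IsProbabilityMeasure ν]
    (g : Fin n → Ωg → EuclideanSpace ℝ (Fin d))
    (hgint : ∀ i, Integrable (g i) ν)
    (hgsqint : ∀ i, Integrable (fun ω => ‖g i ω‖ ^ 2) ν)
    (hgmean : ∀ i, ∫ ω, g i ω ∂ν = gradient (f i) x)
    (hgsq : ∀ i, ∫ ω, ‖g i ω‖ ^ 2 ∂ν ≤ 2 * L * (f i x - finf i) + σ2)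
    (hgavg : ∫ ω, ‖(1 / (n : ℝ)) • ∑ i, g i ω‖ ^ 2 ∂ν
      ≤ 2 * L * (favg x - fstar) + σ2 / (n : ℝ))
    -- the unbiased compressors C₁, …, C_n, mutually independent and independent
    -- of the stochastic gradients (product probability space)
    {Ωc : Fin n → Type*} [∀ i, MeasurableSpace (Ωc i)]
    (κ : ∀ i, Measure (Ωc i)) [∀ i, IsProbabilityMeasure (κ i)]
    (C : ∀ i, Ωc i → EuclideanSpace ℝ (Fin d) → EuclideanSpace ℝ (Fin d))
    (hCint : ∀ i y, Integrable (fun ω => C i ω y) (κ i))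
    (hCsqint : ∀ i y, Integrable (fun ω => ‖C i ω y‖ ^ 2) (κ i))
    (hCunb : ∀ i y, ∫ ω, C i ω y ∂(κ i) = y)
    (hCsq : ∀ i y, ∫ ω, ‖C i ω y‖ ^ 2 ∂(κ i) ≤ δ * ‖y‖ ^ 2)
    -- the stepsize and the resulting point x⁺
    (η : ℝ) (hη : 0 < η)
    (xplus : Ωg × (∀ i, Ωc i) → EuclideanSpace ℝ (Fin d))
    (hxplus : ∀ ω, xplus ω = x - (η / (n : ℝ)) • ∑ i, C i (ω.2 i) (g i ω.1))
    (hxplusint : Integrable (fun ω => ‖xplus ω - xstar‖ ^ 2)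
      (ν.prod (Measure.pi κ))) :
    ∫ ω, ‖xplus ω - xstar‖ ^ 2 ∂(ν.prod (Measure.pi κ))
      ≤ (1 - μq * η) * ‖x - xstar‖ ^ 2
        - 2 * η * (1 - η * δn * L) * (favg x - fstar)
        + η ^ 2 * ((δn - 1) * D + δ * σ2 / (n : ℝ)) := by
  have hn' : (0 : ℝ) < n := by exact_mod_cast hn
  have hC : ∀ i, IsUnbiasedCompressor (κ i) δ (C i) := fun i =>
    ⟨fun y => (memLp_two_iff_integrable_sq_norm (hCint i y).1).2 (hCsqint i y), hCunb i, hCsq i⟩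
  have hg : ∀ i, MemLp (g i) 2 ν := fun i =>
    (memLp_two_iff_integrable_sq_norm (hgint i).1).2 (hgsqint i)
  have hstep : ∀ ω, xplus ω - xstar = (x - xstar) - (η / n) • ∑ i, C i (ω.2 i) (g i ω.1) :=
    fun ω => by rw [hxplus, sub_right_comm]
  simp_rw [hstep] at hxplusint ⊢
  have hmean : ∑ i, ∫ ω, g i ω ∂ν = (n : ℝ) • gradient favg x := by
    rw [Finset.sum_congr rfl fun i _ => hgmean i, hfavg,
      gradient_const_mul_sum (fun i => hfdiff i x), smul_smul, mul_one_div_cancel hn'.ne', one_smul]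
  have hdescent : favg x - fstar + μq / 2 * ‖x - xstar‖ ^ 2 ≤ ⟪x - xstar, gradient favg x⟫ := by
    have := hquasi x
    rw [norm_sub_rev, ← neg_sub x xstar, inner_neg_right, real_inner_comm] at this
    linarith
  have hscale : ∫ ω, ‖∑ i, g i ω‖ ^ 2 ∂ν = n ^ 2 * ∫ ω, ‖(1 / (n : ℝ)) • ∑ i, g i ω‖ ^ 2 ∂ν := by
    rw [integral_norm_smul_sq]
    field_simp
  have hδ' : 0 ≤ δ - 1 := by linarith
  calc _ ≤ _ := IsUnbiasedCompressor.integral_prod_norm_sub_smul_sum_sq_le hC _ _ hg hxplusint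
    _ ≤ ‖x - xstar‖ ^ 2 - 2 * (η / n) * (n * (favg x - fstar + μq / 2 * ‖x - xstar‖ ^ 2))
        + (η / n) ^ 2 * (n ^ 2 * (2 * L * (favg x - fstar) + σ2 / n)
          + (δ - 1) * ∑ i, (2 * L * (f i x - finf i) + σ2)) := by
      rw [hmean, real_inner_smul_right, hscale]
      gcongr with i
      exact hgsq i
    _ = _ := by
      simp only [hδn, hD, hfstar, hfavg, Finset.sum_add_distrib, ← Finset.mul_sum,
        Finset.sum_sub_distrib, Finset.sum_const, Finset.card_univ, Fintype.card_fin, nsmul_eq_mul]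
      field_simp
      ring

/-- one-step descent inequality for DCSGD. With `f = (1/n)Σ fᵢ`
`μ`-quasi convex with minimizer `x*`, `fᵢ` bounded below by `fᵢ*`, unbiased
stochastic gradients `gᵢ` at `x` with the `(L,σ²)`-expected smoothness bounds,
and mutually independent unbiased compressors `Cᵢ ∈ U(δ)` independent of the
gradients, the point `x⁺ = x − (η/n) Σᵢ Cᵢ(gᵢ)` satisfies
`E‖x⁺ − x*‖² ≤ (1 − μη)‖x − x*‖² − 2η(1 − ηδₙL)(f(x) − f*) + η²((δₙ−1)D + δσ²/n)`. -/
theorem dcsgd_one_step_descent {d n : ℕ} (hd : 1 ≤ d) (hn : 1 ≤ n)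
    (L : ℝ) (hL : 0 < L) (σ2 : ℝ) (hσ2 : 0 ≤ σ2) (δ : ℝ) (hδ : 1 ≤ δ)
    (μq : ℝ) (hμq : 0 ≤ μq)
    (f : Fin n → EuclideanSpace ℝ (Fin d) → ℝ)
    (hfdiff : ∀ i, Differentiable ℝ (f i))
    (favg : EuclideanSpace ℝ (Fin d) → ℝ)
    (hfavg : favg = fun y => (1 / (n : ℝ)) * ∑ i, f i y)
    (xstar : EuclideanSpace ℝ (Fin d)) (hmin : ∀ y, favg xstar ≤ favg y)
    (fstar : ℝ) (hfstar : fstar = favg xstar)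
    (hquasi : ∀ y, fstar ≥ favg y + ⟪gradient favg y, xstar - y⟫
      + (μq / 2) * ‖xstar - y‖ ^ 2)
    (finf : Fin n → ℝ) (hfinf : ∀ i, IsGLB (Set.range (f i)) (finf i))
    (D : ℝ) (hD : D = (2 * L / (n : ℝ)) * ∑ i, (f i xstar - finf i))
    (δn : ℝ) (hδn : δn = (δ - 1) / (n : ℝ) + 1)
    (x : EuclideanSpace ℝ (Fin d))
    -- the stochastic gradients g₁, …, g_n at the point x
    {Ωg : Type*} [MeasurableSpace Ωg] (ν : Measure Ωg) [IsProbabilityMeasure ν]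
    (g : Fin n → Ωg → EuclideanSpace ℝ (Fin d))
    (hgint : ∀ i, Integrable (g i) ν)
    (hgsqint : ∀ i, Integrable (fun ω => ‖g i ω‖ ^ 2) ν)
    (hgmean : ∀ i, ∫ ω, g i ω ∂ν = gradient (f i) x)
    (hgsq : ∀ i, ∫ ω, ‖g i ω‖ ^ 2 ∂ν ≤ 2 * L * (f i x - finf i) + σ2)
    (hgavg : ∫ ω, ‖(1 / (n : ℝ)) • ∑ i, g i ω‖ ^ 2 ∂ν
      ≤ 2 * L * (favg x - fstar) + σ2 / (n : ℝ))
    -- the unbiased compressors C₁, …, C_n, mutually independent and independent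
    -- of the stochastic gradients (product probability space)
    {Ωc : Fin n → Type*} [∀ i, MeasurableSpace (Ωc i)]
    (κ : ∀ i, Measure (Ωc i)) [∀ i, IsProbabilityMeasure (κ i)]
    (C : ∀ i, Ωc i → EuclideanSpace ℝ (Fin d) → EuclideanSpace ℝ (Fin d))
    (hCint : ∀ i y, Integrable (fun ω => C i ω y) (κ i))
    (hCsqint : ∀ i y, Integrable (fun ω => ‖C i ω y‖ ^ 2) (κ i))
    (hCunb : ∀ i y, ∫ ω, C i ω y ∂(κ i) = y)
    (hCsq : ∀ i y, ∫ ω, ‖C i ω y‖ ^ 2 ∂(κ i) ≤ δ * ‖y‖ ^ 2)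
    -- the stepsize and the resulting point x⁺
    (η : ℝ) (hη : 0 < η)
    (xplus : Ωg × (∀ i, Ωc i) → EuclideanSpace ℝ (Fin d))
    (hxplus : ∀ ω, xplus ω = x - (η / (n : ℝ)) • ∑ i, C i (ω.2 i) (g i ω.1))
    (hxplusint : Integrable (fun ω => ‖xplus ω - xstar‖ ^ 2)
      (ν.prod (Measure.pi κ))) :
    ∫ ω, ‖xplus ω - xstar‖ ^ 2 ∂(ν.prod (Measure.pi κ))
      ≤ (1 - μq * η) * ‖x - xstar‖ ^ 2
        - 2 * η * (1 - η * δn * L) * (favg x - fstar)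
        + η ^ 2 * ((δn - 1) * D + δ * σ2 / (n : ℝ)) :=
  dcsgd_one_step_descent_general hn L σ2 δ hδ μq f hfdiff favg hfavg xstar fstar hfstar hquasi finf
    D hD δn hδn x ν g hgint hgsqint hgmean hgsq hgavg κ C hCint hCsqint hCunb hCsq η hη xplus hxplus
    hxplusint
end

section
/- Let M ∈ ℝ^{n×n} be a symmetric positive semidefinite matrix. Then M ⪯ n·Diag(M), where Diag(M) is the diagonal matrix with the same diagonal entries as M; that is, n·Diag(M) − M is positive semidefinite. -/
/-!
Both sides are linear in `M`, and every real positive semidefinite matrix is a sum of rank-one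
matrices `v vᵀ`. For `M = v vᵀ` the quadratic form of `n • Diag(M) - M` at `x` is
`n ∑ (vᵢ xᵢ)² - (∑ vᵢ xᵢ)²`, which is nonnegative by Cauchy–Schwarz.
-/

namespace Matrix

variable {ι : Type*}

theorem smul_diagonal_diag_sub_sum [DecidableEq ι] {R κ : Type*} [Ring R] (c : R)
    (s : Finset κ) (M : κ → Matrix ι ι R) :
    c • diagonal (diag (∑ k ∈ s, M k)) - ∑ k ∈ s, M k =
      ∑ k ∈ s, (c • diagonal (diag (M k)) - M k) := by
  ext i j
  simp [diagonal_apply, sum_apply, Finset.mul_sum, Finset.sum_sub_distrib]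

variable [Fintype ι]

theorem dotProduct_vecMulVec_mulVec (v x : ι → ℝ) : x ⬝ᵥ vecMulVec v v *ᵥ x = (v ⬝ᵥ x) ^ 2 := by
  rw [vecMulVec_mulVec, op_smul_eq_smul, dotProduct_smul, smul_eq_mul, dotProduct_comm, sq]

variable [DecidableEq ι]

theorem dotProduct_diagonal_diag_vecMulVec_mulVec (v x : ι → ℝ) :
    x ⬝ᵥ diagonal (diag (vecMulVec v v)) *ᵥ x = ∑ i, (v i * x i) ^ 2 := by
  simp only [dotProduct, mulVec_diagonal, diag_apply, vecMulVec_apply]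
  exact Finset.sum_congr rfl fun i _ => by ring

theorem posSemidef_card_smul_diagonal_diag_vecMulVec_sub (v : ι → ℝ) :
    ((Fintype.card ι : ℝ) • diagonal (diag (vecMulVec v v)) - vecMulVec v v).PosSemidef := by
  refine .of_dotProduct_mulVec_nonneg ?_ fun x => ?_
  · simp [IsHermitian, transpose_vecMulVec]
  · rw [star_trivial, sub_mulVec, dotProduct_sub, smul_mulVec, dotProduct_smul, smul_eq_mul,
      dotProduct_diagonal_diag_vecMulVec_mulVec, dotProduct_vecMulVec_mulVec, sub_nonneg]
    exact sq_sum_le_card_mul_sum_sq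

theorem PosSemidef.card_smul_diagonal_diag_sub {M : Matrix ι ι ℝ} (hM : M.PosSemidef) :
    ((Fintype.card ι : ℝ) • diagonal (diag M) - M).PosSemidef := by
  obtain ⟨m, v, rfl⟩ := posSemidef_iff_eq_sum_vecMulVec.mp hM
  simp only [star_trivial, smul_diagonal_diag_sub_sum]
  exact posSemidef_sum _ fun k _ => posSemidef_card_smul_diagonal_diag_vecMulVec_sub (v k)

end Matrix

/-- If `M ∈ ℝ^{n×n}` is symmetric positive semidefinite, then
`M ⪯ n·Diag(M)`, i.e. `n·Diag(M) − M` is positive semidefinite, where `Diag(M)`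
is the diagonal matrix with the same diagonal entries as `M`. -/
theorem posSemidef_smul_diagonal_sub {n : ℕ} (M : Matrix (Fin n) (Fin n) ℝ)
    (hM : M.PosSemidef) :
    ((n : ℝ) • Matrix.diagonal (Matrix.diag M) - M).PosSemidef := by
  simpa using hM.card_smul_diagonal_diag_sub
end

section
/- Let S be a sampling over [n] with probability matrix P (P_ij = Prob({i,j} ⊆ S)) and probability vector p (p_i = Prob(i ∈ S)). Then the inequality P − p pᵀ ⪯ Diag(p₁v₁, p₂v₂, …, p_n v_n) holds with the choice v_i = n(1 − p_i) for all i; i.e., the matrix Diag(p₁v₁, …, p_n v_n) − (P − p pᵀ) is positive semidefinite. -/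
/-!
`P - p pᵀ` is the covariance matrix of the indicator vector of `S`, hence positive semidefinite,
and its diagonal is `pᵢ (1 - pᵢ)`, so `Diag(pᵢ vᵢ) = n · Diag(P - p pᵀ)`. Every real positive
semidefinite matrix `A` satisfies `A ⪯ n · Diag(A)`: writing `A` as a sum of rank-one matrices
`u uᵀ` reduces this to the Cauchy–Schwarz inequality `(∑ uᵢ xᵢ)² ≤ n ∑ uᵢ² xᵢ²`.
-/

open Matrix Finset

namespace Matrix

variable {ι σ : Type*}

theorem sum_smul_vecMulVec_sub_mean [Fintype σ] {R : Type*} [CommRing R] (w : σ → R)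
    (hw : ∑ s, w s = 1) (u : σ → ι → R) :
    ∑ s, w s • vecMulVec (u s - ∑ t, w t • u t) (u s - ∑ t, w t • u t) =
      ∑ s, w s • vecMulVec (u s) (u s) - vecMulVec (∑ s, w s • u s) (∑ s, w s • u s) := by
  ext i j
  set m := ∑ t, w t • u t
  have hm : ∀ i, m i = ∑ s, w s * u s i := fun i => by simp [m]
  simp only [sum_apply, smul_apply, sub_apply, vecMulVec_apply, Pi.sub_apply, smul_eq_mul]
  have hterm : ∀ s, w s * ((u s i - m i) * (u s j - m j)) =
      w s * (u s i * u s j) - m j * (w s * u s i) - m i * (w s * u s j) + m i * m j * w s :=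
    fun s => by ring
  simp only [hterm, sum_add_distrib, sum_sub_distrib, ← mul_sum, ← hm, hw]
  ring

theorem posSemidef_sum_smul_vecMulVec_sub_vecMulVec_mean [Fintype σ] [Fintype ι] (w : σ → ℝ)
    (hw_nonneg : ∀ s, 0 ≤ w s) (hw : ∑ s, w s = 1) (u : σ → ι → ℝ) :
    (∑ s, w s • vecMulVec (u s) (u s) - vecMulVec (∑ s, w s • u s) (∑ s, w s • u s)).PosSemidef := by
  rw [← sum_smul_vecMulVec_sub_mean w hw]
  exact posSemidef_sum _ fun s _ => (posSemidef_vecMulVec_self_star _).smul (hw_nonneg s)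

variable [Fintype ι] [DecidableEq ι]

theorem dotProduct_card_smul_diagonal_sq_sub_vecMulVec_mulVec (u x : ι → ℝ) :
    star x ⬝ᵥ (((Fintype.card ι : ℝ) • diagonal (fun i => u i ^ 2) - vecMulVec u u) *ᵥ x) =
      Fintype.card ι * ∑ i, (u i * x i) ^ 2 - (∑ i, u i * x i) ^ 2 := by
  simp only [star_trivial, sub_mulVec, smul_mulVec, vecMulVec_mulVec, dotProduct_sub,
    dotProduct_smul]
  simp only [dotProduct, sq, mulVec_diagonal, smul_eq_mul, mul_sum, op_sum, MulOpposite.op_mul,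
    MulOpposite.smul_eq_mul_unop, unop_sum, MulOpposite.unop_mul, MulOpposite.unop_op, sum_mul]
  congr 1 <;> refine sum_congr rfl fun i _ => ?_
  · ring
  · exact sum_congr rfl fun j _ => by ring

theorem posSemidef_card_smul_diagonal_sq_sub_vecMulVec (u : ι → ℝ) :
    ((Fintype.card ι : ℝ) • diagonal (fun i => u i ^ 2) - vecMulVec u u).PosSemidef := by
  refine .of_dotProduct_mulVec_nonneg ?_ fun x => ?_
  · exact ((isHermitian_diagonal _).smul (.all _)).sub (by simp [IsHermitian])
  · rw [dotProduct_card_smul_diagonal_sq_sub_vecMulVec_mulVec, sub_nonneg]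
    simpa using sq_sum_le_card_mul_sum_sq (s := univ) (f := fun i => u i * x i)

theorem PosSemidef.card_smul_diagonal_diag_sub_s11 {A : Matrix ι ι ℝ} (hA : A.PosSemidef) :
    ((Fintype.card ι : ℝ) • diagonal A.diag - A).PosSemidef := by
  obtain ⟨m, v, rfl⟩ := posSemidef_iff_eq_sum_vecMulVec.mp hA
  have hsplit : (Fintype.card ι : ℝ) • diagonal (∑ k, vecMulVec (v k) (star (v k))).diag -
      ∑ k, vecMulVec (v k) (star (v k)) =
        ∑ k, ((Fintype.card ι : ℝ) • diagonal (fun i => v k i ^ 2) - vecMulVec (v k) (v k)) := by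
    ext i j
    by_cases hij : i = j <;> simp [hij, sum_apply, mul_sum, sq]
  rw [hsplit]
  exact posSemidef_sum _ fun k _ => posSemidef_card_smul_diagonal_sq_sub_vecMulVec (v k)

end Matrix

theorem eso_with_vi_n_one_sub_pi_general {n : ℕ}
    (w : Finset (Fin n) → ℝ) (hw : ∀ s, 0 ≤ w s)
    (hsum : ∑ s : Finset (Fin n), w s = 1)
    (P : Matrix (Fin n) (Fin n) ℝ)
    (hP : ∀ i j, P i j = ∑ s : Finset (Fin n), if i ∈ s ∧ j ∈ s then w s else 0)
    (p : Fin n → ℝ)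
    (hp : ∀ i, p i = ∑ s : Finset (Fin n), if i ∈ s then w s else 0)
    (v : Fin n → ℝ) (hv : ∀ i, v i = n * (1 - p i)) :
    (Matrix.diagonal (fun i => p i * v i) - (P - Matrix.vecMulVec p p)).PosSemidef := by
  let χ : Finset (Fin n) → Fin n → ℝ := fun s i => if i ∈ s then 1 else 0
  have hp_mean : p = ∑ s, w s • χ s := by
    ext i
    simp [hp, χ]
  have hP_moment : P = ∑ s, w s • vecMulVec (χ s) (χ s) := by
    ext i j
    simp only [hP, Matrix.sum_apply, Matrix.smul_apply, vecMulVec_apply, χ, ite_zero_mul_ite_zero]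
    simp
  have hcov : (P - vecMulVec p p).PosSemidef := by
    rw [hP_moment, hp_mean]
    exact posSemidef_sum_smul_vecMulVec_sub_vecMulVec_mean w hw hsum χ
  have hdiag : diagonal (fun i => p i * v i) =
      (Fintype.card (Fin n) : ℝ) • diagonal (P - vecMulVec p p).diag := by
    rw [Fintype.card_fin, ← diagonal_smul]
    congr 1
    ext i
    rw [Pi.smul_apply, diag_apply, Matrix.sub_apply, vecMulVec_apply, hv, hP, hp]
    simp only [and_self, smul_eq_mul]
    ring
  rw [hdiag]
  exact hcov.card_smul_diagonal_diag_sub_s11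

/-- For a sampling `S` over `[n]` (modeled by a probability mass
function `w` on subsets of `Fin n`) with probability matrix `P` and probability
vector `p`, the inequality `P − p pᵀ ⪯ Diag(p₁v₁, …, p_n v_n)` holds with
`v_i = n(1 − p_i)`. -/
theorem eso_with_vi_n_one_sub_pi {n : ℕ} (hn : 1 ≤ n)
    (w : Finset (Fin n) → ℝ) (hw : ∀ s, 0 ≤ w s)
    (hsum : ∑ s : Finset (Fin n), w s = 1)
    (P : Matrix (Fin n) (Fin n) ℝ)
    (hP : ∀ i j, P i j = ∑ s : Finset (Fin n), if i ∈ s ∧ j ∈ s then w s else 0)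
    (p : Fin n → ℝ)
    (hp : ∀ i, p i = ∑ s : Finset (Fin n), if i ∈ s then w s else 0)
    (v : Fin n → ℝ) (hv : ∀ i, v i = n * (1 - p i)) :
    (Matrix.diagonal (fun i => p i * v i) - (P - Matrix.vecMulVec p p)).PosSemidef :=
  eso_with_vi_n_one_sub_pi_general w hw hsum P hP p hp v hv
end

section
/- Let S be a proper sampling over [n] with probability matrix P (P_ij = Prob({i,j} ⊆ S)) and probability vector p (p_i = Prob(i ∈ S) > 0), and let ζ₁, …, ζ_n ∈ ℝ^d be fixed vectors with average ζ̄ = (1/n)Σ_{i=1}^n ζ_i. Then the variance of X = Σ_{i∈S} ζ_i/(n p_i) satisfies the exact identity E[‖X − ζ̄‖²] = (1/n²)·Σ_{i=1}^n Σ_{j=1}^n (P_ij − p_i p_j)·⟨ζ_i/p_i, ζ_j/p_j⟩. -/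
open scoped RealInnerProductSpace

/-!
Writing `u i = ζ i / p i` and `χₛ` for the indicator of `s`, the centred estimator is
`X - ζ̄ = (1/n) ∑ᵢ (χₛ i - p i) • u i`, a linear combination of the `u i` with centred random
coefficients. Its expected squared norm is therefore `(1/n²) ∑ᵢ ∑ⱼ Cov(χ i, χ j) ⟪u i, u j⟫`,
and the covariance of two inclusion indicators is `P i j - p i p j`.
-/

open Finset

variable {ι E : Type*} [Fintype ι]

lemma norm_sum_smul_sq [SeminormedAddCommGroup E] [InnerProductSpace ℝ E]
    (a : ι → ℝ) (u : ι → E) :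
    ‖∑ i, a i • u i‖ ^ 2 = ∑ i, ∑ j, a i * a j * ⟪u i, u j⟫ := by
  rw [← real_inner_self_eq_norm_sq, sum_inner]
  refine sum_congr rfl fun i _ => ?_
  rw [inner_sum]
  refine sum_congr rfl fun j _ => ?_
  rw [real_inner_smul_left, real_inner_smul_right, mul_assoc]

lemma sum_weight_mul_norm_sum_smul_sq [SeminormedAddCommGroup E] [InnerProductSpace ℝ E]
    {Ω : Type*} [Fintype Ω] (w : Ω → ℝ) (a : Ω → ι → ℝ) (u : ι → E) :
    ∑ s, w s * ‖∑ i, a s i • u i‖ ^ 2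
      = ∑ i, ∑ j, (∑ s, w s * (a s i * a s j)) * ⟪u i, u j⟫ := by
  simp only [norm_sum_smul_sq, mul_sum, sum_mul]
  rw [sum_comm]
  refine sum_congr rfl fun i _ => ?_
  rw [sum_comm]
  exact sum_congr rfl fun j _ => sum_congr rfl fun s _ => by ring

lemma sum_weight_mul_centered_indicator_mul [DecidableEq ι]
    (w : Finset ι → ℝ) (hsum : ∑ s, w s = 1)
    (P : Matrix ι ι ℝ) (hP : ∀ i j, P i j = ∑ s, if i ∈ s ∧ j ∈ s then w s else 0)
    (p : ι → ℝ) (hp : ∀ i, p i = ∑ s, if i ∈ s then w s else 0) (i j : ι) :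
    ∑ s, w s * (((if i ∈ s then 1 else 0) - p i) * ((if j ∈ s then 1 else 0) - p j))
      = P i j - p i * p j := by
  have hexpand : ∀ s : Finset ι,
      w s * (((if i ∈ s then 1 else 0) - p i) * ((if j ∈ s then 1 else 0) - p j))
        = (if i ∈ s ∧ j ∈ s then w s else 0) - p j * (if i ∈ s then w s else 0)
          - p i * (if j ∈ s then w s else 0) + p i * p j * w s := by
    intro s
    by_cases hi : i ∈ s <;> by_cases hj : j ∈ s <;> simp [hi, hj] <;> ring
  simp only [hexpand, sum_add_distrib, sum_sub_distrib, ← mul_sum, ← hP, ← hp, hsum]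
  ring

lemma sum_mem_smul_sub_sum_eq_sum_centered_indicator_smul [DecidableEq ι]
    [AddCommGroup E] [Module ℝ E]
    (p : ι → ℝ) (hp : ∀ i, p i ≠ 0) (v : ι → E) (s : Finset ι) :
    ∑ i ∈ s, (1 / p i) • v i - ∑ i, v i
      = ∑ i, ((if i ∈ s then 1 else 0) - p i) • (1 / p i) • v i := by
  have hterm : ∀ i, ((if i ∈ s then 1 else 0) - p i) • (1 / p i) • v i
      = (if i ∈ s then (1 / p i) • v i else 0) - v i := by
    intro i
    rw [smul_smul, sub_mul, sub_smul, mul_one_div_cancel (hp i), one_smul]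
    split_ifs <;> simp
  rw [sum_congr rfl fun i _ => hterm i, sum_sub_distrib, sum_ite_mem, univ_inter]

theorem subsampled_estimator_variance_identity_general {n d : ℕ}
    (w : Finset (Fin n) → ℝ)
    (hsum : ∑ s : Finset (Fin n), w s = 1)
    (P : Matrix (Fin n) (Fin n) ℝ)
    (hP : ∀ i j, P i j = ∑ s : Finset (Fin n), if i ∈ s ∧ j ∈ s then w s else 0)
    (p : Fin n → ℝ)
    (hp : ∀ i, p i = ∑ s : Finset (Fin n), if i ∈ s then w s else 0)
    (hproper : ∀ i, 0 < p i)
    (ζ : Fin n → EuclideanSpace ℝ (Fin d))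
    (ζbar : EuclideanSpace ℝ (Fin d)) (hζbar : ζbar = (1 / (n : ℝ)) • ∑ i, ζ i) :
    ∑ s : Finset (Fin n), w s * ‖(∑ i ∈ s, (1 / ((n : ℝ) * p i)) • ζ i) - ζbar‖ ^ 2
      = (1 / (n : ℝ) ^ 2) *
          ∑ i, ∑ j, (P i j - p i * p j) * ⟪(1 / p i) • ζ i, (1 / p j) • ζ j⟫ := by
  have hdev : ∀ s : Finset (Fin n), (∑ i ∈ s, (1 / ((n : ℝ) * p i)) • ζ i) - ζbar
      = (1 / (n : ℝ)) • ∑ i, ((if i ∈ s then 1 else 0) - p i) • (1 / p i) • ζ i := by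
    intro s
    rw [← sum_mem_smul_sub_sum_eq_sum_centered_indicator_smul p (fun i => (hproper i).ne'),
      smul_sub, hζbar, smul_sum]
    simp only [smul_sum, smul_smul, one_div_mul_one_div]
  calc ∑ s, w s * ‖(∑ i ∈ s, (1 / ((n : ℝ) * p i)) • ζ i) - ζbar‖ ^ 2
      = (1 / (n : ℝ)) ^ 2 * ∑ s, w s *
          ‖∑ i, ((if i ∈ s then 1 else 0) - p i) • (1 / p i) • ζ i‖ ^ 2 := by
        simp only [hdev, norm_smul, mul_pow, Real.norm_eq_abs, sq_abs, mul_sum]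
        exact sum_congr rfl fun s _ => by ring
    _ = (1 / (n : ℝ) ^ 2) *
          ∑ i, ∑ j, (P i j - p i * p j) * ⟪(1 / p i) • ζ i, (1 / p j) • ζ j⟫ := by
        rw [sum_weight_mul_norm_sum_smul_sq, one_div_pow]
        simp only [sum_weight_mul_centered_indicator_mul w hsum P hP p hp]

/-- For a proper sampling `S` over `[n]` (modeled by a probability
mass function `w` on subsets of `Fin n`) with probability matrix `P` and probability
vector `p`, and fixed vectors `ζ₁, …, ζ_n ∈ ℝ^d` with average `ζ̄`, the variance of
`X = Σ_{i∈S} ζ_i/(n p_i)` satisfies the exact identity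
`E‖X − ζ̄‖² = (1/n²) Σᵢ Σⱼ (P_ij − p_i p_j) ⟨ζ_i/p_i, ζ_j/p_j⟩`. -/
theorem subsampled_estimator_variance_identity {n d : ℕ} (hn : 1 ≤ n)
    (w : Finset (Fin n) → ℝ) (hw : ∀ s, 0 ≤ w s)
    (hsum : ∑ s : Finset (Fin n), w s = 1)
    (P : Matrix (Fin n) (Fin n) ℝ)
    (hP : ∀ i j, P i j = ∑ s : Finset (Fin n), if i ∈ s ∧ j ∈ s then w s else 0)
    (p : Fin n → ℝ)
    (hp : ∀ i, p i = ∑ s : Finset (Fin n), if i ∈ s then w s else 0)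
    (hproper : ∀ i, 0 < p i)
    (ζ : Fin n → EuclideanSpace ℝ (Fin d))
    (ζbar : EuclideanSpace ℝ (Fin d)) (hζbar : ζbar = (1 / (n : ℝ)) • ∑ i, ζ i) :
    ∑ s : Finset (Fin n), w s * ‖(∑ i ∈ s, (1 / ((n : ℝ) * p i)) • ζ i) - ζbar‖ ^ 2
      = (1 / (n : ℝ) ^ 2) *
          ∑ i, ∑ j, (P i j - p i * p j) * ⟪(1 / p i) • ζ i, (1 / p j) • ζ j⟫ :=
  subsampled_estimator_variance_identity_general w hsum P hP p hp hproper ζ ζbar hζbar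
end

section
/- In ℝ³, define f₁(x) = ⟨a,x⟩² + (1/4)‖x‖², f₂(x) = ⟨b,x⟩² + (1/4)‖x‖², f₃(x) = ⟨c,x⟩² + (1/4)‖x‖² with a = (−3,2,2), b = (2,−3,2), c = (2,2,−3). Fix t > 0 and η > 0, let x⁰ = (t,t,t), and let (x^k) be any sequence satisfying x^{k+1} = x^k − (η/3)·Σ_{i=1}^3 hᵢᵏ, where each hᵢᵏ is obtained from ∇fᵢ(x^k) by a Top-1 compressor: hᵢᵏ = (∇fᵢ(x^k))_j · e_j for some coordinate j maximizing |(∇fᵢ(x^k))_j| (e_j the j-th standard basis vector). Then x^k = (1 + 11η/6)^k · x⁰ for all k ≥ 0; in particular ‖x^k‖ → ∞ as k → ∞, so distributed compressed gradient descent with the Top-1 compressor diverges exponentially. (Along this trajectory, e.g. ∇f₁(x^k) = (s/2)(−11, 9, 9) when x^k = (s,s,s), so the maximizing coordinate is unique and the Top-1 outputs are (−11s/2)e₁, (−11s/2)e₂, (−11s/2)e₃ respectively.) -/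
open scoped RealInnerProductSpace

/-!
Along the diagonal `x = (s,s,s)` the gradient of `⟪v,·⟫² + ‖·‖²/4` is `2⟪v,x⟫ v + x/2`, and since
the coordinates of each of `a, b, c` sum to `1` this is `(s/2)(4v + 1)`: it equals `-11s/2` at the
coordinate where `v` is `-3` and `9s/2` at the other two. So the Top-1 compressor is forced to keep
coordinate `i` for `fᵢ`, the three compressed gradients add up to `-(11s/2)(1,1,1)`, and one step
multiplies `x` by `1 + 11η/6 > 1` while keeping it on the diagonal.
-/

theorem hasGradientAt_inner_sq_add_mul_norm_sq {E : Type*} [NormedAddCommGroup E]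
    [InnerProductSpace ℝ E] [CompleteSpace E] (v x : E) (c : ℝ) :
    HasGradientAt (fun y => ⟪v, y⟫ ^ 2 + c * ‖y‖ ^ 2) ((2 * ⟪v, x⟫) • v + (2 * c) • x) x := by
  rw [hasGradientAt_iff_hasFDerivAt]
  refine ((((innerSL ℝ v).hasFDerivAt (x := x)).pow 2).fun_add
    ((hasStrictFDerivAt_norm_sq x).hasFDerivAt.const_mul c)).congr_fderiv ?_
  ext w
  simp
  ring

theorem EuclideanSpace.inner_eq_mul_sum_of_forall_apply_eq {ι : Type*} [Fintype ι]
    (v y : EuclideanSpace ℝ ι) {s : ℝ} (hy : ∀ j, y j = s) :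
    ⟪v, y⟫ = s * ∑ j, v j := by
  simp [PiLp.inner_apply, hy, Finset.mul_sum]

theorem tendsto_norm_pow_smul_atTop {E : Type*} [NormedAddCommGroup E] [NormedSpace ℝ E]
    {r : ℝ} (hr : 1 < r) {v : E} (hv : v ≠ 0) :
    Filter.Tendsto (fun k : ℕ => ‖r ^ k • v‖) Filter.atTop Filter.atTop := by
  simp only [norm_smul, norm_pow, Real.norm_of_nonneg (zero_le_one.trans hr.le)]
  exact (tendsto_pow_atTop_atTop_of_one_lt hr).atTop_mul_const (norm_pos_iff.2 hv)

def IsTopOneCompression {ι : Type*} [DecidableEq ι] (g h : EuclideanSpace ℝ ι) : Prop :=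
  ∃ j, (∀ j', |g j'| ≤ |g j|) ∧ h = EuclideanSpace.single j (g j)

theorem IsTopOneCompression.eq_single {ι : Type*} [DecidableEq ι] {g h : EuclideanSpace ℝ ι}
    (hgh : IsTopOneCompression g h) {j₀ : ι} (hj₀ : ∀ j ≠ j₀, |g j| < |g j₀|) :
    h = EuclideanSpace.single j₀ (g j₀) := by
  obtain ⟨j, hmax, rfl⟩ := hgh
  obtain rfl : j = j₀ := by
    by_contra hne
    exact (hmax j₀).not_gt (hj₀ j hne)
  rfl

section

variable {v y : EuclideanSpace ℝ (Fin 3)} {j₀ : Fin 3} {s : ℝ}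

theorem gradient_apply_of_forall_apply_eq (hv : ∀ j, v j = if j = j₀ then -3 else 2)
    (hy : ∀ j, y j = s) (j : Fin 3) :
    gradient (fun z => ⟪v, z⟫ ^ 2 + (1 / 4) * ‖z‖ ^ 2) y j
      = if j = j₀ then -(11 / 2) * s else 9 / 2 * s := by
  have hsum : ∑ j, v j = 1 := by
    simp only [Fin.sum_univ_three, hv]
    fin_cases j₀ <;> norm_num [Fin.ext_iff]
  rw [(hasGradientAt_inner_sq_add_mul_norm_sq v y _).gradient,
    EuclideanSpace.inner_eq_mul_sum_of_forall_apply_eq v y hy, hsum]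
  simp only [PiLp.add_apply, PiLp.smul_apply, smul_eq_mul, hv, hy]
  split_ifs <;> ring

theorem IsTopOneCompression.eq_single_of_forall_apply_eq {h : EuclideanSpace ℝ (Fin 3)}
    (hv : ∀ j, v j = if j = j₀ then -3 else 2) (hy : ∀ j, y j = s) (hs : s ≠ 0)
    (hh : IsTopOneCompression (gradient (fun z => ⟪v, z⟫ ^ 2 + (1 / 4) * ‖z‖ ^ 2) y) h) :
    h = EuclideanSpace.single j₀ (-(11 / 2) * s) := by
  have hg := gradient_apply_of_forall_apply_eq hv hy
  rw [hh.eq_single fun j hj => ?_, hg, if_pos rfl]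
  rw [hg, hg, if_neg hj, if_pos rfl, abs_mul, abs_mul]
  have := abs_pos.2 hs
  norm_num
  linarith

end

/-- the Top-1 divergence counterexample (Example 1 of Beznosikov et al.
2020). In ℝ³, with `f₁(x) = ⟨a,x⟩² + ‖x‖²/4`, `f₂(x) = ⟨b,x⟩² + ‖x‖²/4`,
`f₃(x) = ⟨c,x⟩² + ‖x‖²/4`, `a = (−3,2,2)`, `b = (2,−3,2)`, `c = (2,2,−3)`,
starting from `x⁰ = (t,t,t)`, `t > 0`, any sequence generated by
`x^{k+1} = x^k − (η/3) Σᵢ hᵢᵏ` with `hᵢᵏ` a Top-1 compression of `∇fᵢ(x^k)` satisfies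
`x^k = (1 + 11η/6)^k x⁰`, and in particular `‖x^k‖ → ∞`. -/
theorem top1_dcgd_diverges
    (a b c : EuclideanSpace ℝ (Fin 3))
    (ha : a 0 = -3 ∧ a 1 = 2 ∧ a 2 = 2)
    (hb : b 0 = 2 ∧ b 1 = -3 ∧ b 2 = 2)
    (hc : c 0 = 2 ∧ c 1 = 2 ∧ c 2 = -3)
    (F : Fin 3 → EuclideanSpace ℝ (Fin 3) → ℝ)
    (hF1 : ∀ y, F 0 y = ⟪a, y⟫ ^ 2 + (1 / 4) * ‖y‖ ^ 2)
    (hF2 : ∀ y, F 1 y = ⟪b, y⟫ ^ 2 + (1 / 4) * ‖y‖ ^ 2)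
    (hF3 : ∀ y, F 2 y = ⟪c, y⟫ ^ 2 + (1 / 4) * ‖y‖ ^ 2)
    (t η : ℝ) (ht : 0 < t) (hη : 0 < η)
    (x : ℕ → EuclideanSpace ℝ (Fin 3))
    (hx0 : ∀ i : Fin 3, x 0 i = t)
    (h : ℕ → Fin 3 → EuclideanSpace ℝ (Fin 3))
    -- each hᵢᵏ is a Top-1 compression of ∇fᵢ(x^k): it keeps a coordinate of
    -- maximal absolute value and zeroes out the rest
    (htop : ∀ k (i : Fin 3), ∃ j : Fin 3,
      (∀ j' : Fin 3, |gradient (F i) (x k) j'| ≤ |gradient (F i) (x k) j|) ∧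
      h k i = EuclideanSpace.single j (gradient (F i) (x k) j))
    (hrec : ∀ k, x (k + 1) = x k - (η / 3) • ∑ i : Fin 3, h k i) :
    (∀ k, x k = (1 + 11 * η / 6) ^ k • x 0) ∧
      Filter.Tendsto (fun k => ‖x k‖) Filter.atTop Filter.atTop := by
  set r := 1 + 11 * η / 6 with hr
  have hr1 : 1 < r := by linarith
  set w : Fin 3 → EuclideanSpace ℝ (Fin 3) := ![a, b, c]
  have hw : ∀ i j, w i j = if j = i then -3 else 2 := by
    obtain ⟨ha0, ha1, ha2⟩ := ha
    obtain ⟨hb0, hb1, hb2⟩ := hb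
    obtain ⟨hc0, hc1, hc2⟩ := hc
    intro i j
    fin_cases i <;> fin_cases j <;> simp [w, *]
  have hF : ∀ i, F i = fun z => ⟪w i, z⟫ ^ 2 + (1 / 4) * ‖z‖ ^ 2 := by
    intro i
    fin_cases i <;> exact funext ‹_›
  have hcoord : ∀ k j, x k j = r ^ k * t := by
    intro k
    induction k with
    | zero => simpa using hx0
    | succ k ih =>
      have hs : r ^ k * t ≠ 0 := by positivity
      have hcomp : ∀ i, h k i = EuclideanSpace.single i (-(11 / 2) * (r ^ k * t)) := fun i =>
        IsTopOneCompression.eq_single_of_forall_apply_eq (hw i) ih hs (hF i ▸ htop k i)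
      intro j
      simp [hrec k, hcomp, ih]
      ring
  have hxk : ∀ k, x k = r ^ k • x 0 := fun k => by
    ext j
    simp [hcoord]
  refine ⟨hxk, ?_⟩
  have hx0ne : x 0 ≠ 0 := fun h0 => ht.ne' (by simpa [h0] using (hx0 0).symm)
  exact (tendsto_norm_pow_smul_atTop hr1 hx0ne).congr fun k => by rw [hxk k]
end
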